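/- arXiv:2306.01967 — 3 statements merged into one kernel-verified Lean document; each statement's English description precedes it below -/
import Mathlib

section
/- Fix positive integers J, k, f, an even integer p ≥ 2, and constants λ̄ > 0, ξ > 0, m̄ > 0. Suppose that for every T0 ∈ ℕ the following holds on some probability space: (i) there are deterministic vectors X_j ∈ ℝ^k and μ_j ∈ ℝ^f for j = 1, …, J+1, and deterministic vectors β_s ∈ ℝ^k, λ_s ∈ ℝ^f for s ∈ {1, …, T0, t} with t > T0, such that every entry of every λ_s is bounded in absolute value by λ̄ and the smallest eigenvalue of (1/T0)·∑_{s=1}^{T0} λ_s λ_sᵀ is at least ξ; (ii) the real random variables ε_{j,s} (j = 1, …, J+1, s ∈ {1, …, T0, t}) are mutually independent, E[ε_{j,s}] = 0, (1/T0)·∑_{s=1}^{T0} E|ε_{j,s}|^q ≤ m̄ for q ∈ {2, p}, and E|ε_{j,t}| < ∞; (iii) untreated potential outcomes are Y⁰_{j,s} = X_jᵀβ_s + μ_jᵀλ_s + ε_{j,s}; (iv) random weights W_2, …, W_{J+1} are measurable with respect to the σ-algebra generated by {ε_{j,s} : 1 ≤ j ≤ J+1, 1 ≤ s ≤ T0}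 and almost surely satisfy W_j ≥ 0, ∑_{j=2}^{J+1} W_j = 1, ∑_{j=2}^{J+1} W_j X_j = X_1, and ∑_{j=2}^{J+1} W_j Y⁰_{j,s} = Y⁰_{1,s} for all s ≤ T0. Then the bias of the synthetic control estimator vanishes asymptotically: E[ Y⁰_{1,t} − ∑_{j=2}^{J+1} W_j Y⁰_{j,t} ] → 0 as T0 → ∞. -/
/-!
The synthetic-control gap `y ↦ y 0 - ∑ j, w j * y j.succ` is linear, so once the weights
reproduce the observed predictors, the bias at any period `s` splits as `a ⬝ λ_s` plus the mean
gap of the shocks, where `a` is the mean gap of the unobserved loadings `μ`. The weights are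
functions of the pretreatment shocks, hence independent of the shocks at `t`; so that shock
term vanishes at `t` and the bias is `a ⬝ λ_t`. In each pretreatment period the exact fit turns
the same splitting into `a ⬝ λ_s = -E[gap of ε_s]`. Summing against `λ_s` and using the
eigenvalue bound gives `(ξ T₀)² |a|² ≤ |b|²` with `b i = E[gap of ∑ s, λ_s i ε_s]`. Because the
weights lie in the simplex, `|b i|` is at most `∑ j, E|∑ s, λ_s i ε_{j,s}|`, and the
independence of the shocks bounds the second moment of that sum by `λ̄² m̄ T₀`. Hence
`|a| = O(T₀^(-1/2))`, and so is the bias.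
-/

open MeasureTheory ProbabilityTheory Finset Filter

lemma abs_le_one_of_mem_stdSimplex {ι : Type*} [Fintype ι] {w : ι → ℝ}
    (hw : w ∈ stdSimplex ℝ ι) (j : ι) : |w j| ≤ 1 :=
  abs_le.2 ⟨by linarith [(mem_Icc_of_mem_stdSimplex hw j).1], (mem_Icc_of_mem_stdSimplex hw j).2⟩

lemma sq_mul_sum_sq_le_sum_sq_of_le_sum_mul {ι : Type*} [Fintype ι] {a b : ι → ℝ} {c : ℝ}
    (hc : 0 ≤ c) (h : c * ∑ i, a i ^ 2 ≤ ∑ i, a i * b i) :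
    c ^ 2 * ∑ i, a i ^ 2 ≤ ∑ i, b i ^ 2 := by
  set S := ∑ i, a i ^ 2
  have hS : 0 ≤ S := by positivity
  have hcs : (∑ i, a i * b i) ^ 2 ≤ S * ∑ i, b i ^ 2 := sum_mul_sq_le_sq_mul_sq _ _ _
  have hsq : (c * S) ^ 2 ≤ S * ∑ i, b i ^ 2 := (pow_le_pow_left₀ (by positivity) h 2).trans hcs
  rcases hS.eq_or_lt with hS0 | hSpos
  · rw [← hS0, mul_zero]; positivity
  · nlinarith

lemma sq_mul_sum_sq_le_of_forall_sum_mul_eq {ι σ : Type*} [Fintype ι] {S : Finset σ} {a : ι → ℝ}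
    {l : σ → ι → ℝ} {g : σ → ℝ} {c : ℝ} (hc : 0 ≤ c)
    (hcoer : c * ∑ i, a i ^ 2 ≤ ∑ s ∈ S, (∑ i, a i * l s i) ^ 2)
    (hfit : ∀ s ∈ S, ∑ i, a i * l s i = g s) :
    c ^ 2 * ∑ i, a i ^ 2 ≤ ∑ i, (∑ s ∈ S, l s i * g s) ^ 2 := by
  refine sq_mul_sum_sq_le_sum_sq_of_le_sum_mul hc (hcoer.trans_eq ?_)
  calc ∑ s ∈ S, (∑ i, a i * l s i) ^ 2 = ∑ s ∈ S, ∑ i, a i * (l s i * g s) := by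
        refine Finset.sum_congr rfl fun s hs => ?_
        rw [sq, ← hfit s hs, Finset.mul_sum]
        exact Finset.sum_congr rfl fun i _ => by ring
    _ = ∑ i, a i * ∑ s ∈ S, l s i * g s := by
        rw [Finset.sum_comm]; simp_rw [Finset.mul_sum]

lemma sq_sum_mul_le_of_abs_le {ι : Type*} [Fintype ι] {a l : ι → ℝ} {L : ℝ}
    (hl : ∀ i, |l i| ≤ L) :
    (∑ i, a i * l i) ^ 2 ≤ (∑ i, a i ^ 2) * (Fintype.card ι * L ^ 2) := by
  refine (sum_mul_sq_le_sq_mul_sq _ _ _).trans (mul_le_mul_of_nonneg_left ?_ (by positivity))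
  calc ∑ i, l i ^ 2 ≤ ∑ _i : ι, L ^ 2 :=
        Finset.sum_le_sum fun i _ => sq_le_sq' (abs_le.1 (hl i)).1 (abs_le.1 (hl i)).2
    _ = Fintype.card ι * L ^ 2 := by simp

lemma tendsto_zero_of_mul_sq_le {x : ℕ → ℝ} {c K : ℝ} (hc : 0 < c)
    (h : ∀ᶠ T in atTop, c * T * x T ^ 2 ≤ K) : Tendsto x atTop (nhds 0) := by
  have hsq : Tendsto (fun T => x T ^ 2) atTop (nhds 0) := by
    refine squeeze_zero' (Eventually.of_forall fun T => sq_nonneg _) ?_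
      ((tendsto_const_nhds (x := K)).div_atTop
        (tendsto_natCast_atTop_atTop.const_mul_atTop hc))
    filter_upwards [h, eventually_gt_atTop 0] with T hT hT0
    rw [le_div_iff₀ (by positivity)]
    linarith
  rw [tendsto_zero_iff_abs_tendsto_zero]
  have hsqrt := (Real.continuous_sqrt.tendsto 0).comp hsq
  simpa only [Function.comp_def, Real.sqrt_sq_eq_abs, Real.sqrt_zero] using hsqrt

lemma sq_integral_abs_le_integral_sq {Ω : Type*} [MeasurableSpace Ω] {P : Measure Ω}
    [IsProbabilityMeasure P] {X : Ω → ℝ} (hX : MemLp X 2 P) :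
    (∫ ω, |X ω| ∂P) ^ 2 ≤ ∫ ω, X ω ^ 2 ∂P := by
  have h := variance_nonneg |X| P
  rw [variance_eq_sub hX.abs] at h
  simpa [sq_abs] using h

lemma integral_sq_sum_const_mul {Ω ι : Type*} [MeasurableSpace Ω] {P : Measure Ω}
    [IsFiniteMeasure P]
    {X : ι → Ω → ℝ} {S : Finset ι} (c : ι → ℝ) (hX : ∀ s ∈ S, MemLp (X s) 2 P)
    (hmean : ∀ s ∈ S, ∫ ω, X s ω ∂P = 0)
    (hind : Set.Pairwise S fun s s' => IndepFun (X s) (X s') P) :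
    ∫ ω, (∑ s ∈ S, c s * X s ω) ^ 2 ∂P = ∑ s ∈ S, c s ^ 2 * ∫ ω, X s ω ^ 2 ∂P := by
  have hcX : ∀ s ∈ S, MemLp (fun ω => c s * X s ω) 2 P := fun s hs => (hX s hs).const_mul _
  have hsum : (∑ s ∈ S, fun ω => c s * X s ω) = fun ω => ∑ s ∈ S, c s * X s ω := by
    ext ω; simp [Finset.sum_apply]
  have hvar := IndepFun.variance_sum hcX fun s hs s' hs' hss' =>
    (hind hs hs' hss').comp (measurable_const_mul (c s)) (measurable_const_mul (c s'))
  rw [hsum, variance_of_integral_eq_zero (memLp_finsetSum S hcX).aemeasurable] at hvar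
  · rw [hvar]
    refine Finset.sum_congr rfl fun s hs => ?_
    rw [variance_const_mul, variance_of_integral_eq_zero (hX s hs).aemeasurable (hmean s hs)]
  · rw [integral_finsetSum _ fun s hs => ((hX s hs).integrable one_le_two).const_mul _]
    exact Finset.sum_eq_zero fun s hs => by rw [integral_const_mul, hmean s hs, mul_zero]

lemma integral_sq_sum_const_mul_le {Ω ι : Type*} [MeasurableSpace Ω] {P : Measure Ω}
    [IsFiniteMeasure P] {X : ι → Ω → ℝ} {S : Finset ι} {c : ι → ℝ} {L : ℝ}
    (hX : ∀ s ∈ S, MemLp (X s) 2 P) (hmean : ∀ s ∈ S, ∫ ω, X s ω ∂P = 0)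
    (hind : Set.Pairwise S fun s s' => IndepFun (X s) (X s') P) (hc : ∀ s ∈ S, |c s| ≤ L) :
    ∫ ω, (∑ s ∈ S, c s * X s ω) ^ 2 ∂P ≤ L ^ 2 * ∑ s ∈ S, ∫ ω, X s ω ^ 2 ∂P := by
  rw [integral_sq_sum_const_mul c hX hmean hind, Finset.mul_sum]
  refine Finset.sum_le_sum fun s hs => ?_
  have hL : c s ^ 2 ≤ L ^ 2 := sq_le_sq' (abs_le.1 (hc s hs)).1 (abs_le.1 (hc s hs)).2
  exact mul_le_mul_of_nonneg_right hL (integral_nonneg fun ω => sq_nonneg _)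

lemma ProbabilityTheory.iIndepFun.indepFun_of_measurable_biSup {Ω ι β γ : Type*} [MeasurableSpace Ω]
    {P : Measure Ω} [MeasurableSpace β] [MeasurableSpace γ] {g : ι → Ω → β}
    (hg : iIndepFun g P) (hgm : ∀ i, Measurable (g i)) {S : Set ι} {i : ι} (hi : i ∉ S)
    {h : Ω → γ} (hh : Measurable[⨆ i ∈ S, MeasurableSpace.comap (g i) inferInstance] h) :
    IndepFun h (g i) P := by
  have hindep := indep_biSup_compl (fun i => (hgm i).comap_le) hg.iIndep S
  rw [IndepFun_iff_Indep]
  exact indep_of_indep_of_le_left (indep_of_indep_of_le_right hindep (le_iSup₂_of_le i hi le_rfl))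
    hh.comap_le

namespace SyntheticControl

variable {J : ℕ}

def synthGap (w : Fin J → ℝ) : (Fin (J + 1) → ℝ) →ₗ[ℝ] ℝ :=
  LinearMap.proj 0 - ∑ j, w j • LinearMap.proj j.succ

@[simp]
lemma synthGap_apply (w : Fin J → ℝ) (y : Fin (J + 1) → ℝ) :
    synthGap w y = y 0 - ∑ j, w j * y j.succ := by
  simp [synthGap]

lemma abs_synthGap_le {w : Fin J → ℝ} (hw : w ∈ stdSimplex ℝ (Fin J)) (y : Fin (J + 1) → ℝ) :
    |synthGap w y| ≤ ∑ j, |y j| := by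
  rw [synthGap_apply, Fin.sum_univ_succ]
  calc |y 0 - ∑ j, w j * y j.succ| ≤ |y 0| + ∑ j : Fin J, |w j * y j.succ| :=
        (abs_sub _ _).trans (by gcongr; exact abs_sum_le_sum_abs _ _)
    _ ≤ |y 0| + ∑ j : Fin J, |y j.succ| := by
        refine add_le_add le_rfl (Finset.sum_le_sum fun j _ => ?_)
        rw [abs_mul]
        exact mul_le_of_le_one_left (abs_nonneg _) (abs_le_one_of_mem_stdSimplex hw j)

lemma synthGap_factorModel {k f : ℕ} {w : Fin J → ℝ} {X : Fin (J + 1) → Fin k → ℝ}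
    (hX : ∀ i, ∑ j, w j * X j.succ i = X 0 i) (μ : Fin (J + 1) → Fin f → ℝ) (β : Fin k → ℝ)
    (l : Fin f → ℝ) (e : Fin (J + 1) → ℝ) :
    synthGap w (fun j => ∑ i, X j i * β i + ∑ i, μ j i * l i + e j)
      = ∑ i, synthGap w (fun j => μ j i) * l i + synthGap w e := by
  have hdecomp : (fun j => ∑ i, X j i * β i + ∑ i, μ j i * l i + e j)
      = ∑ i, β i • (fun j => X j i) + ∑ i, l i • (fun j => μ j i) + e := by
    ext j
    simp [Finset.sum_apply, mul_comm]
  have hXgap : ∀ i, synthGap w (fun j => X j i) = 0 := fun i => by simp [hX]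
  rw [hdecomp, map_add, map_add, map_sum, map_sum]
  simp only [map_smul, hXgap, smul_eq_mul, mul_zero, Finset.sum_const_zero, zero_add, mul_comm]

variable {Ω : Type*} [MeasurableSpace Ω] {P : Measure Ω} {W : Fin J → Ω → ℝ}

lemma integrable_synthGap [IsFiniteMeasure P] (hW : ∀ j, AEStronglyMeasurable (W j) P)
    (hWs : ∀ᵐ ω ∂P, (fun j => W j ω) ∈ stdSimplex ℝ (Fin J)) {z : Fin (J + 1) → Ω → ℝ}
    (hz : ∀ j, Integrable (z j) P) :
    Integrable (fun ω => synthGap (fun j => W j ω) (fun j => z j ω)) P := by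
  simp only [synthGap_apply]
  refine (hz 0).sub (integrable_finsetSum _ fun j _ => (hz j.succ).bdd_mul (c := 1) (hW j) ?_)
  filter_upwards [hWs] with ω hω
  exact abs_le_one_of_mem_stdSimplex hω j

lemma integral_synthGap_eq_zero [IsFiniteMeasure P] (hW : ∀ j, AEStronglyMeasurable (W j) P)
    (hWs : ∀ᵐ ω ∂P, (fun j => W j ω) ∈ stdSimplex ℝ (Fin J)) {z : Fin (J + 1) → Ω → ℝ}
    (hz : ∀ j, Integrable (z j) P) (hz0 : ∀ j, ∫ ω, z j ω ∂P = 0)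
    (hind : ∀ j, IndepFun (W j) (z j.succ) P) :
    ∫ ω, synthGap (fun j => W j ω) (fun j => z j ω) ∂P = 0 := by
  have hWz : ∀ j, Integrable (fun ω => W j ω * z j.succ ω) P := fun j =>
    (hz j.succ).bdd_mul (c := 1) (hW j) (hWs.mono fun ω hω => abs_le_one_of_mem_stdSimplex hω j)
  simp only [synthGap_apply]
  rw [integral_sub (hz 0) (integrable_finsetSum _ fun j _ => hWz j),
    integral_finsetSum _ fun j _ => hWz j, hz0 0, zero_sub, neg_eq_zero]
  refine Finset.sum_eq_zero fun j _ => ?_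
  rw [(hind j).integral_fun_mul_eq_mul_integral (hW j) (hz j.succ).aestronglyMeasurable,
    hz0 j.succ, mul_zero]

lemma sq_integral_synthGap_le [IsProbabilityMeasure P] (hW : ∀ j, AEStronglyMeasurable (W j) P)
    (hWs : ∀ᵐ ω ∂P, (fun j => W j ω) ∈ stdSimplex ℝ (Fin J)) {z : Fin (J + 1) → Ω → ℝ}
    (hz : ∀ j, MemLp (z j) 2 P) :
    (∫ ω, synthGap (fun j => W j ω) (fun j => z j ω) ∂P) ^ 2
      ≤ (J + 1) * ∑ j, ∫ ω, z j ω ^ 2 ∂P := by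
  have hzint : ∀ j, Integrable (z j) P := fun j => (hz j).integrable one_le_two
  have habs : |∫ ω, synthGap (fun j => W j ω) (fun j => z j ω) ∂P| ≤ ∑ j, ∫ ω, |z j ω| ∂P :=
    calc |∫ ω, synthGap (fun j => W j ω) (fun j => z j ω) ∂P|
        ≤ ∫ ω, |synthGap (fun j => W j ω) (fun j => z j ω)| ∂P := abs_integral_le_integral_abs
      _ ≤ ∫ ω, ∑ j, |z j ω| ∂P :=
          integral_mono_ae (integrable_synthGap hW hWs hzint).abs
            (integrable_finsetSum _ fun j _ => (hzint j).abs)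
            (hWs.mono fun ω hω => abs_synthGap_le hω _)
      _ = ∑ j, ∫ ω, |z j ω| ∂P := integral_finsetSum _ fun j _ => (hzint j).abs
  calc (∫ ω, synthGap (fun j => W j ω) (fun j => z j ω) ∂P) ^ 2
      ≤ (∑ j, ∫ ω, |z j ω| ∂P) ^ 2 := by
        rw [← sq_abs]; exact pow_le_pow_left₀ (abs_nonneg _) habs 2
    _ ≤ (J + 1) * ∑ j, (∫ ω, |z j ω| ∂P) ^ 2 := by
        simpa using sq_sum_le_card_mul_sum_sq (s := Finset.univ) (f := fun j => ∫ ω, |z j ω| ∂P)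
    _ ≤ (J + 1) * ∑ j, ∫ ω, z j ω ^ 2 ∂P := by
        gcongr with j
        exact sq_integral_abs_le_integral_sq (hz j)

lemma integral_synthGap_factorModel [IsFiniteMeasure P] {k f : ℕ}
    {X : Fin (J + 1) → Fin k → ℝ} {μ : Fin (J + 1) → Fin f → ℝ} {β : Fin k → ℝ} {l : Fin f → ℝ}
    {Y e : Fin (J + 1) → Ω → ℝ}
    (hY : ∀ j ω, Y j ω = ∑ i, X j i * β i + ∑ i, μ j i * l i + e j ω)
    (hW : ∀ j, AEStronglyMeasurable (W j) P)
    (hWs : ∀ᵐ ω ∂P, (fun j => W j ω) ∈ stdSimplex ℝ (Fin J))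
    (hX : ∀ᵐ ω ∂P, ∀ i, ∑ j, W j ω * X j.succ i = X 0 i) (he : ∀ j, Integrable (e j) P) :
    ∫ ω, synthGap (fun j => W j ω) (fun j => Y j ω) ∂P
      = ∑ i, (∫ ω, synthGap (fun j => W j ω) (fun j => μ j i) ∂P) * l i
        + ∫ ω, synthGap (fun j => W j ω) (fun j => e j ω) ∂P := by
  have hμ : ∀ i, Integrable (fun ω => synthGap (fun j => W j ω) (fun j => μ j i)) P := fun i =>
    integrable_synthGap (z := fun j _ => μ j i) hW hWs fun j => integrable_const _
  rw [integral_congr_ae (hX.mono fun ω hω => by simp only [hY]; exact synthGap_factorModel hω ..),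
    integral_add (integrable_finsetSum _ fun i _ => (hμ i).mul_const _)
      (integrable_synthGap hW hWs he),
    integral_finsetSum _ fun i _ => (hμ i).mul_const _]
  simp only [integral_mul_const]

lemma sum_mul_integral_synthGap [IsFiniteMeasure P] {ι : Type*}
    (hW : ∀ j, AEStronglyMeasurable (W j) P)
    (hWs : ∀ᵐ ω ∂P, (fun j => W j ω) ∈ stdSimplex ℝ (Fin J)) {z : Fin (J + 1) → ι → Ω → ℝ}
    {S : Finset ι} (c : ι → ℝ) (hz : ∀ j, ∀ s ∈ S, Integrable (z j s) P) :
    ∑ s ∈ S, c s * ∫ ω, synthGap (fun j => W j ω) (fun j => z j s ω) ∂P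
      = ∫ ω, synthGap (fun j => W j ω) (fun j => ∑ s ∈ S, c s * z j s ω) ∂P := by
  have hlin : ∀ ω, synthGap (fun j => W j ω) (fun j => ∑ s ∈ S, c s * z j s ω)
      = ∑ s ∈ S, c s * synthGap (fun j => W j ω) (fun j => z j s ω) := fun ω => by
    have : (fun j => ∑ s ∈ S, c s * z j s ω) = ∑ s ∈ S, c s • fun j => z j s ω := by
      ext j; simp [Finset.sum_apply]
    rw [this, map_sum]
    simp only [map_smul, smul_eq_mul]
  simp_rw [hlin]
  rw [integral_finsetSum _ fun s hs =>
    (integrable_synthGap hW hWs fun j => hz j s hs).const_mul _]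
  simp only [integral_const_mul]

lemma sq_integral_synthGap_sum_le [IsProbabilityMeasure P] {ι : Type*}
    (hW : ∀ j, AEStronglyMeasurable (W j) P)
    (hWs : ∀ᵐ ω ∂P, (fun j => W j ω) ∈ stdSimplex ℝ (Fin J)) {ε : Fin (J + 1) → ι → Ω → ℝ}
    {S : Finset ι} {c : ι → ℝ} {L M : ℝ} (hε : ∀ j, ∀ s ∈ S, MemLp (ε j s) 2 P)
    (hmean : ∀ j, ∀ s ∈ S, ∫ ω, ε j s ω ∂P = 0)
    (hind : ∀ j, Set.Pairwise S fun s s' => IndepFun (ε j s) (ε j s') P)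
    (hc : ∀ s ∈ S, |c s| ≤ L) (hM : ∀ j, ∑ s ∈ S, ∫ ω, ε j s ω ^ 2 ∂P ≤ M) :
    (∫ ω, synthGap (fun j => W j ω) (fun j => ∑ s ∈ S, c s * ε j s ω) ∂P) ^ 2
      ≤ (J + 1) ^ 2 * (L ^ 2 * M) := by
  refine (sq_integral_synthGap_le hW hWs fun j =>
    memLp_finsetSum S fun s hs => (hε j s hs).const_mul _).trans ?_
  calc (J + 1) * ∑ j, ∫ ω, (∑ s ∈ S, c s * ε j s ω) ^ 2 ∂P
      ≤ (J + 1) * ∑ _j : Fin (J + 1), L ^ 2 * M := by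
        gcongr with j
        exact (integral_sq_sum_const_mul_le (hε j) (hmean j) (hind j) hc).trans
          (mul_le_mul_of_nonneg_left (hM j) (sq_nonneg L))
    _ = (J + 1) ^ 2 * (L ^ 2 * M) := by simp; ring

lemma sq_mul_sum_sq_integral_synthGap_loading_le [IsProbabilityMeasure P] {ι : Type*} {k f : ℕ}
    {S : Finset ι} {X : Fin (J + 1) → Fin k → ℝ} {μ : Fin (J + 1) → Fin f → ℝ}
    {β : ι → Fin k → ℝ} {lam : ι → Fin f → ℝ} {ε Y : Fin (J + 1) → ι → Ω → ℝ} {c L M : ℝ}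
    (hc : 0 ≤ c)
    (hcoer : ∀ v : Fin f → ℝ, c * ∑ i, v i ^ 2 ≤ ∑ s ∈ S, (∑ i, v i * lam s i) ^ 2)
    (hlam : ∀ s ∈ S, ∀ i, |lam s i| ≤ L)
    (hY : ∀ j s ω, Y j s ω = ∑ i, X j i * β s i + ∑ i, μ j i * lam s i + ε j s ω)
    (hε : ∀ j, ∀ s ∈ S, MemLp (ε j s) 2 P) (hmean : ∀ j, ∀ s ∈ S, ∫ ω, ε j s ω ∂P = 0)
    (hind : ∀ j, Set.Pairwise S fun s s' => IndepFun (ε j s) (ε j s') P)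
    (hM : ∀ j, ∑ s ∈ S, ∫ ω, ε j s ω ^ 2 ∂P ≤ M)
    (hW : ∀ j, AEStronglyMeasurable (W j) P)
    (hWs : ∀ᵐ ω ∂P, (fun j => W j ω) ∈ stdSimplex ℝ (Fin J))
    (hX : ∀ᵐ ω ∂P, ∀ i, ∑ j, W j ω * X j.succ i = X 0 i)
    (hfit : ∀ s ∈ S, ∀ᵐ ω ∂P, synthGap (fun j => W j ω) (fun j => Y j s ω) = 0) :
    c ^ 2 * ∑ i, (∫ ω, synthGap (fun j => W j ω) (fun j => μ j i) ∂P) ^ 2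
      ≤ f * ((J + 1) ^ 2 * (L ^ 2 * M)) := by
  set a : Fin f → ℝ := fun i => ∫ ω, synthGap (fun j => W j ω) (fun j => μ j i) ∂P
  set g : ι → ℝ := fun s => -∫ ω, synthGap (fun j => W j ω) (fun j => ε j s ω) ∂P
  have hpre : ∀ s ∈ S, ∑ i, a i * lam s i = g s := fun s hs => by
    have h := integral_synthGap_factorModel (hY · s) hW hWs hX fun j =>
      (hε j s hs).integrable one_le_two
    rw [integral_eq_zero_of_ae (hfit s hs)] at h
    simp only [g]
    linarith
  have hb : ∀ i, (∑ s ∈ S, lam s i * g s) ^ 2 ≤ (J + 1) ^ 2 * (L ^ 2 * M) := fun i => by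
    simp only [g, mul_neg, Finset.sum_neg_distrib, neg_sq]
    rw [sum_mul_integral_synthGap hW hWs _ fun j s hs => (hε j s hs).integrable one_le_two]
    exact sq_integral_synthGap_sum_le hW hWs hε hmean hind (fun s hs => hlam s hs i) hM
  calc c ^ 2 * ∑ i, a i ^ 2 ≤ ∑ i, (∑ s ∈ S, lam s i * g s) ^ 2 :=
        sq_mul_sum_sq_le_of_forall_sum_mul_eq hc (hcoer a) hpre
    _ ≤ ∑ _i : Fin f, (J + 1) ^ 2 * (L ^ 2 * M) := Finset.sum_le_sum fun i _ => hb i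
    _ = f * ((J + 1) ^ 2 * (L ^ 2 * M)) := by simp

lemma indepFun_shock_of_measurable_pretreatment {T t : ℕ} (ht : T < t)
    {ε : Fin (J + 1) → ℕ → Ω → ℝ} (hεm : ∀ j s, Measurable (ε j s))
    (hindep : iIndepFun
      (fun js : Fin (J + 1) × {s : ℕ // s ∈ Icc 1 T ∨ s = t} => ε js.1 js.2.1) P)
    {V : Ω → ℝ}
    (hV : Measurable[⨆ (j : Fin (J + 1)) (s ∈ Icc 1 T),
      MeasurableSpace.comap (ε j s) inferInstance] V) (j : Fin (J + 1)) :
    IndepFun V (ε j t) P := by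
  refine hindep.indepFun_of_measurable_biSup (fun js => hεm _ _)
    (S := {js | js.2.1 ∈ Icc 1 T}) (i := (j, ⟨t, Or.inr rfl⟩)) (by simp; omega) (hV.mono ?_ le_rfl)
  refine iSup₂_le fun j' s => iSup_le fun hs => ?_
  exact le_iSup₂_of_le (ι := Fin (J + 1) × {s : ℕ // s ∈ Icc 1 T ∨ s = t})
    (κ := fun js => js ∈ {js : Fin (J + 1) × {s : ℕ // s ∈ Icc 1 T ∨ s = t} | js.2.1 ∈ Icc 1 T})
    (j', ⟨s, Or.inl hs⟩) hs le_rfl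

lemma sq_mul_sq_integral_synthGap_le [IsProbabilityMeasure P] {ι : Type*} {k f : ℕ}
    {S : Finset ι} {t : ι} {X : Fin (J + 1) → Fin k → ℝ} {μ : Fin (J + 1) → Fin f → ℝ}
    {β : ι → Fin k → ℝ} {lam : ι → Fin f → ℝ} {ε Y : Fin (J + 1) → ι → Ω → ℝ} {c L M : ℝ}
    (hc : 0 ≤ c)
    (hcoer : ∀ v : Fin f → ℝ, c * ∑ i, v i ^ 2 ≤ ∑ s ∈ S, (∑ i, v i * lam s i) ^ 2)
    (hlam : ∀ s ∈ S, ∀ i, |lam s i| ≤ L) (hlamt : ∀ i, |lam t i| ≤ L)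
    (hY : ∀ j s ω, Y j s ω = ∑ i, X j i * β s i + ∑ i, μ j i * lam s i + ε j s ω)
    (hε : ∀ j, ∀ s ∈ S, MemLp (ε j s) 2 P) (hmean : ∀ j, ∀ s ∈ S, ∫ ω, ε j s ω ∂P = 0)
    (hind : ∀ j, Set.Pairwise S fun s s' => IndepFun (ε j s) (ε j s') P)
    (hM : ∀ j, ∑ s ∈ S, ∫ ω, ε j s ω ^ 2 ∂P ≤ M)
    (hεt : ∀ j, Integrable (ε j t) P) (hmeant : ∀ j, ∫ ω, ε j t ω ∂P = 0)
    (hW : ∀ j, AEStronglyMeasurable (W j) P)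
    (hWs : ∀ᵐ ω ∂P, (fun j => W j ω) ∈ stdSimplex ℝ (Fin J))
    (hX : ∀ᵐ ω ∂P, ∀ i, ∑ j, W j ω * X j.succ i = X 0 i)
    (hfit : ∀ s ∈ S, ∀ᵐ ω ∂P, synthGap (fun j => W j ω) (fun j => Y j s ω) = 0)
    (hWt : ∀ j j', IndepFun (W j) (ε j' t) P) :
    c ^ 2 * (∫ ω, synthGap (fun j => W j ω) (fun j => Y j t ω) ∂P) ^ 2
      ≤ f ^ 2 * (J + 1) ^ 2 * L ^ 4 * M := by
  rw [integral_synthGap_factorModel (hY · t) hW hWs hX hεt,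
    integral_synthGap_eq_zero hW hWs hεt hmeant fun j => hWt j j.succ, add_zero]
  have hloading := sq_mul_sum_sq_integral_synthGap_loading_le hc hcoer hlam hY hε hmean hind hM
    hW hWs hX hfit
  calc c ^ 2 * (∑ i, (∫ ω, synthGap (fun j => W j ω) (fun j => μ j i) ∂P) * lam t i) ^ 2
      ≤ c ^ 2 * ((∑ i, (∫ ω, synthGap (fun j => W j ω) (fun j => μ j i) ∂P) ^ 2)
          * (Fintype.card (Fin f) * L ^ 2)) := by
        gcongr; exact sq_sum_mul_le_of_abs_le hlamt
    _ ≤ (f * ((J + 1) ^ 2 * (L ^ 2 * M))) * (f * L ^ 2) := by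
        rw [← mul_assoc, Fintype.card_fin]; gcongr
    _ = f ^ 2 * (J + 1) ^ 2 * L ^ 4 * M := by ring

lemma mul_sq_integral_synthGap_le_of_Icc [IsProbabilityMeasure P] {k f T t : ℕ}
    {lamBar ξ mBar : ℝ} {X : Fin (J + 1) → Fin k → ℝ} {μ : Fin (J + 1) → Fin f → ℝ}
    {β : ℕ → Fin k → ℝ} {lam : ℕ → Fin f → ℝ} {ε Y : Fin (J + 1) → ℕ → Ω → ℝ} (hT : 0 < T)
    (ht : T < t) (hξ : 0 < ξ) (hlamBd : ∀ s, (s ∈ Icc 1 T ∨ s = t) → ∀ i, |lam s i| ≤ lamBar)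
    (heig : ∀ v : Fin f → ℝ,
      ξ * ∑ i, v i ^ 2 ≤ (T : ℝ)⁻¹ * ∑ s ∈ Icc 1 T, (∑ i, v i * lam s i) ^ 2)
    (hεm : ∀ j s, Measurable (ε j s))
    (hindep : iIndepFun
      (fun js : Fin (J + 1) × {s : ℕ // s ∈ Icc 1 T ∨ s = t} => ε js.1 js.2.1) P)
    (hmean : ∀ j s, (s ∈ Icc 1 T ∨ s = t) → ∫ ω, ε j s ω ∂P = 0)
    (hmom : ∀ j, (∀ s ∈ Icc 1 T, Integrable (fun ω => |ε j s ω| ^ 2) P) ∧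
      (T : ℝ)⁻¹ * ∑ s ∈ Icc 1 T, ∫ ω, |ε j s ω| ^ 2 ∂P ≤ mBar)
    (hmomt : ∀ j, Integrable (fun ω => |ε j t ω|) P)
    (hY : ∀ j s ω, Y j s ω = ∑ i, X j i * β s i + ∑ i, μ j i * lam s i + ε j s ω)
    (hWm : ∀ j, Measurable[⨆ (j' : Fin (J + 1)) (s ∈ Icc 1 T),
      MeasurableSpace.comap (ε j' s) inferInstance] (W j))
    (hWfit : ∀ᵐ ω ∂P, (∀ j, 0 ≤ W j ω) ∧ (∑ j, W j ω) = 1 ∧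
      (∀ i, ∑ j, W j ω * X j.succ i = X 0 i) ∧
      (∀ s ∈ Icc 1 T, ∑ j, W j ω * Y j.succ s ω = Y 0 s ω)) :
    ξ ^ 2 * T * (∫ ω, synthGap (fun j => W j ω) (fun j => Y j t ω) ∂P) ^ 2
      ≤ f ^ 2 * (J + 1) ^ 2 * lamBar ^ 4 * mBar := by
  have hTR : (0 : ℝ) < T := Nat.cast_pos.2 hT
  have hcoer : ∀ v : Fin f → ℝ,
      ξ * T * ∑ i, v i ^ 2 ≤ ∑ s ∈ Icc 1 T, (∑ i, v i * lam s i) ^ 2 := fun v => by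
    have h := heig v
    rwa [le_inv_mul_iff₀ hTR, mul_left_comm, ← mul_assoc] at h
  have hε : ∀ j, ∀ s ∈ Icc 1 T, MemLp (ε j s) 2 P := fun j s hs =>
    (memLp_two_iff_integrable_sq (hεm j s).aestronglyMeasurable).2
      (by simpa only [sq_abs] using (hmom j).1 s hs)
  have hM : ∀ j, ∑ s ∈ Icc 1 T, ∫ ω, ε j s ω ^ 2 ∂P ≤ T * mBar := fun j => by
    have h := (hmom j).2
    simp only [sq_abs] at h
    rwa [inv_mul_le_iff₀ hTR] at h
  have hpair : ∀ j, Set.Pairwise (Icc 1 T : Set ℕ) fun s s' => IndepFun (ε j s) (ε j s') P :=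
    fun j s hs s' hs' hss' => hindep.indepFun (i := (j, ⟨s, Or.inl hs⟩))
      (j := (j, ⟨s', Or.inl hs'⟩)) (by simpa using hss')
  have hWae : ∀ j, AEStronglyMeasurable (W j) P := fun j =>
    ((hWm j).mono (iSup₂_le fun j' s => iSup_le fun _ => (hεm j' s).comap_le)
      le_rfl).aestronglyMeasurable
  have hbound := sq_mul_sq_integral_synthGap_le (t := t) (by positivity) hcoer
    (fun s hs => hlamBd s (Or.inl hs)) (hlamBd t (Or.inr rfl)) hY hε
    (fun j s hs => hmean j s (Or.inl hs)) hpair hM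
    (fun j => (integrable_norm_iff (hεm j t).aestronglyMeasurable).1 (hmomt j))
    (fun j => hmean j t (Or.inr rfl)) hWae (hWfit.mono fun ω h => ⟨h.1, h.2.1⟩)
    (hWfit.mono fun ω h => h.2.2.1)
    (fun s hs => hWfit.mono fun ω h => by simp [h.2.2.2 s hs])
    (fun j j' => indepFun_shock_of_measurable_pretreatment ht hεm hindep (hWm j) j')
  exact le_of_mul_le_mul_left (by linear_combination hbound) hTR

end SyntheticControl

theorem synthetic_control_asymptotically_unbiased_general
    (J k f p : ℕ)
    (lamBar ξ mBar : ℝ) (hξ : 0 < ξ)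
    (Ω : ℕ → Type*) [∀ T0, MeasurableSpace (Ω T0)]
    (P : ∀ T0, Measure (Ω T0)) (hP : ∀ T0, IsProbabilityMeasure (P T0))
    (t : ℕ → ℕ) (ht : ∀ T0, T0 < t T0)
    (X : ∀ T0 : ℕ, Fin (J + 1) → Fin k → ℝ) (μ : ∀ T0 : ℕ, Fin (J + 1) → Fin f → ℝ)
    (β : ℕ → ℕ → Fin k → ℝ) (lam : ℕ → ℕ → Fin f → ℝ)
    (hlamBd : ∀ T0 s, (s ∈ Finset.Icc 1 T0 ∨ s = t T0) → ∀ i, |lam T0 s i| ≤ lamBar)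
    (heig : ∀ T0 : ℕ, 0 < T0 → ∀ v : Fin f → ℝ,
      ξ * ∑ i, v i ^ 2 ≤
        (T0 : ℝ)⁻¹ * ∑ s ∈ Finset.Icc 1 T0, (∑ i, v i * lam T0 s i) ^ 2)
    (ε : ∀ T0 : ℕ, Fin (J + 1) → ℕ → Ω T0 → ℝ)
    (hεmeas : ∀ T0 j s, Measurable (ε T0 j s))
    (hindep : ∀ T0, iIndepFun
      (fun js : Fin (J + 1) × {s : ℕ // s ∈ Finset.Icc 1 T0 ∨ s = t T0} =>
        ε T0 js.1 js.2.1) (P T0))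
    (hmean : ∀ T0 j s, (s ∈ Finset.Icc 1 T0 ∨ s = t T0) → ∫ ω, ε T0 j s ω ∂P T0 = 0)
    (hmom : ∀ T0 : ℕ, 0 < T0 → ∀ (j : Fin (J + 1)), ∀ q ∈ ({2, p} : Finset ℕ),
      (∀ s ∈ Finset.Icc 1 T0, Integrable (fun ω => |ε T0 j s ω| ^ q) (P T0)) ∧
      (T0 : ℝ)⁻¹ * ∑ s ∈ Finset.Icc 1 T0, ∫ ω, |ε T0 j s ω| ^ q ∂P T0 ≤ mBar)
    (hmomt : ∀ T0 j, Integrable (fun ω => |ε T0 j (t T0) ω|) (P T0))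
    (Y0 : ∀ T0 : ℕ, Fin (J + 1) → ℕ → Ω T0 → ℝ)
    (hY0 : ∀ T0 j s ω,
      Y0 T0 j s ω = (∑ i, X T0 j i * β T0 s i) + (∑ i, μ T0 j i * lam T0 s i) + ε T0 j s ω)
    (W : ∀ T0 : ℕ, Fin J → Ω T0 → ℝ)
    (hWmeas : ∀ T0 j,
      Measurable[⨆ (j' : Fin (J + 1)) (s ∈ Finset.Icc 1 T0),
        MeasurableSpace.comap (ε T0 j' s) inferInstance] (W T0 j))
    (hWfit : ∀ T0, ∀ᵐ ω ∂P T0,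
      (∀ j, 0 ≤ W T0 j ω) ∧
      (∑ j, W T0 j ω) = 1 ∧
      (∀ i, ∑ j, W T0 j ω * X T0 j.succ i = X T0 0 i) ∧
      (∀ s ∈ Finset.Icc 1 T0, ∑ j, W T0 j ω * Y0 T0 j.succ s ω = Y0 T0 0 s ω)) :
    Tendsto
      (fun T0 : ℕ =>
        ∫ ω, (Y0 T0 0 (t T0) ω - ∑ j, W T0 j ω * Y0 T0 j.succ (t T0) ω) ∂P T0)
      atTop (nhds 0) := by
  refine tendsto_zero_of_mul_sq_le (K := f ^ 2 * (J + 1) ^ 2 * lamBar ^ 4 * mBar)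
    (pow_pos hξ 2) ?_
  filter_upwards [eventually_gt_atTop 0] with T0 hT0
  have := hP T0
  simpa using SyntheticControl.mul_sq_integral_synthGap_le_of_Icc hT0 (ht T0) hξ (hlamBd T0)
    (heig T0 hT0) (hεmeas T0) (hindep T0) (hmean T0) (fun j => hmom T0 hT0 j 2 (by simp))
    (hmomt T0) (hY0 T0) (hWmeas T0) (hWfit T0)

/-- Asymptotic unbiasedness of the synthetic control estimator
(Theorem 1 of the paper, after Abadie–Diamond–Hainmueller 2010).  For each number of
pretreatment periods `T0` we are given, on a probability space, an interactive fixed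
effects model (unit `0` of `Fin (J+1)` is the treated unit and the controls are
`j.succ`) with bounded factors, the eigenvalue condition, mutually independent mean-zero
shocks with uniformly bounded normalised moments, and weights measurable with respect to
the pretreatment shocks that a.s. satisfy adding-up, non-negativity and exact
pretreatment fit.  Then the bias `E[Y⁰_{1,t} − ∑_j W_j Y⁰_{j,t}]` tends to `0` as
`T0 → ∞`. -/
theorem synthetic_control_asymptotically_unbiased
    (J k f p : ℕ) (hJ : 0 < J) (hk : 0 < k) (hf : 0 < f)
    (hp : Even p) (hp2 : 2 ≤ p)
    (lamBar ξ mBar : ℝ) (hlam : 0 < lamBar) (hξ : 0 < ξ) (hm : 0 < mBar)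
    (Ω : ℕ → Type*) [∀ T0, MeasurableSpace (Ω T0)]
    (P : ∀ T0, Measure (Ω T0)) (hP : ∀ T0, IsProbabilityMeasure (P T0))
    (t : ℕ → ℕ) (ht : ∀ T0, T0 < t T0)
    (X : ∀ T0 : ℕ, Fin (J + 1) → Fin k → ℝ) (μ : ∀ T0 : ℕ, Fin (J + 1) → Fin f → ℝ)
    (β : ℕ → ℕ → Fin k → ℝ) (lam : ℕ → ℕ → Fin f → ℝ)
    (hlamBd : ∀ T0 s, (s ∈ Finset.Icc 1 T0 ∨ s = t T0) → ∀ i, |lam T0 s i| ≤ lamBar)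
    (heig : ∀ T0 : ℕ, 0 < T0 → ∀ v : Fin f → ℝ,
      ξ * ∑ i, v i ^ 2 ≤
        (T0 : ℝ)⁻¹ * ∑ s ∈ Finset.Icc 1 T0, (∑ i, v i * lam T0 s i) ^ 2)
    (ε : ∀ T0 : ℕ, Fin (J + 1) → ℕ → Ω T0 → ℝ)
    (hεmeas : ∀ T0 j s, Measurable (ε T0 j s))
    (hindep : ∀ T0, iIndepFun
      (fun js : Fin (J + 1) × {s : ℕ // s ∈ Finset.Icc 1 T0 ∨ s = t T0} =>
        ε T0 js.1 js.2.1) (P T0))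
    (hmean : ∀ T0 j s, (s ∈ Finset.Icc 1 T0 ∨ s = t T0) → ∫ ω, ε T0 j s ω ∂P T0 = 0)
    (hmom : ∀ T0 : ℕ, 0 < T0 → ∀ (j : Fin (J + 1)), ∀ q ∈ ({2, p} : Finset ℕ),
      (∀ s ∈ Finset.Icc 1 T0, Integrable (fun ω => |ε T0 j s ω| ^ q) (P T0)) ∧
      (T0 : ℝ)⁻¹ * ∑ s ∈ Finset.Icc 1 T0, ∫ ω, |ε T0 j s ω| ^ q ∂P T0 ≤ mBar)
    (hmomt : ∀ T0 j, Integrable (fun ω => |ε T0 j (t T0) ω|) (P T0))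
    (Y0 : ∀ T0 : ℕ, Fin (J + 1) → ℕ → Ω T0 → ℝ)
    (hY0 : ∀ T0 j s ω,
      Y0 T0 j s ω = (∑ i, X T0 j i * β T0 s i) + (∑ i, μ T0 j i * lam T0 s i) + ε T0 j s ω)
    (W : ∀ T0 : ℕ, Fin J → Ω T0 → ℝ)
    (hWmeas : ∀ T0 j,
      Measurable[⨆ (j' : Fin (J + 1)) (s ∈ Finset.Icc 1 T0),
        MeasurableSpace.comap (ε T0 j' s) inferInstance] (W T0 j))
    (hWfit : ∀ T0, ∀ᵐ ω ∂P T0,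
      (∀ j, 0 ≤ W T0 j ω) ∧
      (∑ j, W T0 j ω) = 1 ∧
      (∀ i, ∑ j, W T0 j ω * X T0 j.succ i = X T0 0 i) ∧
      (∀ s ∈ Finset.Icc 1 T0, ∑ j, W T0 j ω * Y0 T0 j.succ s ω = Y0 T0 0 s ω)) :
    Tendsto
      (fun T0 : ℕ =>
        ∫ ω, (Y0 T0 0 (t T0) ω - ∑ j, W T0 j ω * Y0 T0 j.succ (t T0) ω) ∂P T0)
      atTop (nhds 0) :=
  synthetic_control_asymptotically_unbiased_general J k f p lamBar ξ mBar hξ Ω P hP t ht X μ β lam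
    hlamBd heig ε hεmeas hindep hmean hmom hmomt Y0 hY0 W hWmeas hWfit
end

section
/- Fix positive integers J, T0, k, f, an even integer p ≥ 2, a post-treatment index t > T0, and constants λ̄ > 0, ξ > 0. Suppose on a probability space: (i) deterministic vectors X_j ∈ ℝ^k, μ_j ∈ ℝ^f (j = 1, …, J+1) and β_s ∈ ℝ^k, λ_s ∈ ℝ^f (s ∈ {1, …, T0, t}) are given, every entry of every λ_s is bounded in absolute value by λ̄, and the smallest eigenvalue of (1/T0)·∑_{s=1}^{T0} λ_s λ_sᵀ is at least ξ; (ii) the real random variables ε_{j,s} are mutually independent across (j, s), E[ε_{j,s}] = 0, E|ε_{j,s}|^p < ∞, and E|ε_{j,t}| < ∞; (iii) Y⁰_{j,s} = X_jᵀβ_s + μ_jᵀλ_s + ε_{j,s}; (iv) random weights W_2, …, W_{J+1} are measurable with respect to the σ-algebra generated by the pretreatment shocks {ε_{j,s} : s ≤ T0} and almost surely satisfy W_j ≥ 0, ∑_j W_j = 1, ∑_j W_j X_j = X_1, and ∑_j W_j Y⁰_{j,s} = Y⁰_{1,s} for all s ≤ T0. Define m̄_q = max_{j} (1/T0)·∑_{s=1}^{T0}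 E|ε_{j,s}|^q for q ∈ {2, p}. Then |E[ Y⁰_{1,t} − ∑_{j=2}^{J+1} W_j Y⁰_{j,t} ]| ≤ J · C(p)^{1/p} · (λ̄² f / ξ) · max{ m̄_p^{1/p} / T0^{1−1/p}, m̄_2^{1/2} / T0^{1/2} }. -/
/-!
Exact pretreatment fit together with the model gives, for `s ≤ T₀`,
`vᵀλ_s = ∑ⱼ Wⱼ ε_{j,s} - ε_{0,s}`, where `v = μ₀ - ∑ⱼ Wⱼ μⱼ` is the loading gap between the
treated unit `0` and its synthetic control. So the bias is `E[vᵀλ_t]` plus the mean of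
`ε_{0,t} - ∑ⱼ Wⱼ ε_{j,t}`, which vanishes because the weights are functions of the
pretreatment shocks only, and these are independent of the period-`t` shocks.
Testing the fit against `v` and using the eigenvalue condition gives `ξ ‖v‖ ≤ ‖g‖` with
`g = (1/T₀) ∑_s λ_s (vᵀλ_s) = ∑ⱼ Wⱼ dⱼ`, `dⱼ = (1/T₀) ∑_s λ_s (ε_{j,s} - ε_{0,s})`; as the weights
are convex, `‖g‖² ≤ ∑ⱼ ‖dⱼ‖²`, and independence across periods gives
`E (dⱼ)ᵢ² ≤ 2 λ̄² m̄₂ / T₀`. By Cauchy–Schwarz the bias is at most `(λ̄² f / ξ) √(2 J m̄₂ / T₀)`,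
which is below the stated bound when `J ≥ 2`, since `C(p) ≥ C(2) = 1`. With one control the
weight is `1`, the gap is deterministic and orthogonal to every `λ_s`, hence zero.
-/

open MeasureTheory ProbabilityTheory Finset

/-- `C(p) = E[(θ − 1)^p]` where `θ` is a Poisson random variable with parameter 1. -/
noncomputable def poissonRosenthalConst (p : ℕ) : ℝ :=
  ∑' n : ℕ, (Real.exp (-1) / (n.factorial : ℝ)) * ((n : ℝ) - 1) ^ p

open scoped Nat

lemma hasSum_pow_div_factorial_mul_descFactorial (r : ℝ) (k : ℕ) :
    HasSum (fun n : ℕ => r ^ n / n ! * n.descFactorial k) (r ^ k * Real.exp r) := by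
  rw [← hasSum_nat_add_iff' k]
  have hlow : ∑ i ∈ range k, r ^ i / i ! * (i.descFactorial k : ℝ) = 0 :=
    sum_eq_zero fun i hi => by
      rw [Nat.descFactorial_eq_zero_iff_lt.mpr (mem_range.mp hi)]; simp
  have hexp : HasSum (fun m : ℕ => r ^ m / m !) (Real.exp r) := by
    rw [Real.exp_eq_exp_ℝ]; exact NormedSpace.expSeries_div_hasSum_exp r
  rw [hlow, sub_zero]
  refine (hexp.mul_left (r ^ k)).congr_fun fun m => ?_
  have hfac := Nat.factorial_mul_descFactorial (Nat.le_add_left k m)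
  rw [Nat.add_sub_cancel] at hfac
  rw [← hfac, pow_add]
  push_cast
  field_simp

lemma hasSum_poisson_sub_one_sq :
    HasSum (fun n : ℕ => Real.exp (-1) / n ! * ((n : ℝ) - 1) ^ 2) 1 := by
  have h d := (hasSum_pow_div_factorial_mul_descFactorial 1 d).mul_left (Real.exp (-1))
  have hcomb := ((h 2).sub (h 1)).add (h 0)
  have hval : Real.exp (-1) * (1 ^ 2 * Real.exp 1) - Real.exp (-1) * (1 ^ 1 * Real.exp 1)
      + Real.exp (-1) * (1 ^ 0 * Real.exp 1) = 1 := by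
    simp only [one_pow, one_mul, ← Real.exp_add]; norm_num
  rw [hval] at hcomb
  refine hcomb.congr_fun fun n => ?_
  rw [Nat.cast_descFactorial_two, Nat.descFactorial_one, Nat.descFactorial_zero]
  ring

lemma summable_poisson_mul_pow (p : ℕ) :
    Summable (fun n : ℕ => Real.exp (-1) / n ! * ((n : ℝ) - 1) ^ p) := by
  refine Summable.of_norm_bounded
    ((Real.summable_pow_div_factorial (Real.exp 1)).mul_left (p ! * Real.exp 1)) fun n => ?_
  have hbase : |(n : ℝ) - 1| ≤ n + 1 := abs_le.mpr ⟨by linarith, by linarith⟩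
  have hexp : ((n : ℝ) + 1) ^ p ≤ p ! * (Real.exp 1 ^ n * Real.exp 1) := by
    rw [← Real.exp_nat_mul, ← Real.exp_add, mul_one, ← div_le_iff₀' (by positivity)]
    exact Real.pow_div_factorial_le_exp _ (by positivity) p
  rw [norm_mul, norm_pow, Real.norm_eq_abs, Real.norm_eq_abs,
    abs_of_nonneg (by positivity : 0 ≤ Real.exp (-1) / n !)]
  calc Real.exp (-1) / n ! * |(n : ℝ) - 1| ^ p ≤ 1 / n ! * ((n : ℝ) + 1) ^ p := by
        gcongr
        · exact Real.exp_le_one_iff.mpr (by norm_num)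
    _ ≤ 1 / n ! * (p ! * (Real.exp 1 ^ n * Real.exp 1)) := by gcongr
    _ = p ! * Real.exp 1 * (Real.exp 1 ^ n / n !) := by ring

lemma Int.sq_le_pow_of_even (x : ℤ) {p : ℕ} (hp : Even p) (hp2 : 2 ≤ p) : x ^ 2 ≤ x ^ p := by
  rw [← hp.pow_abs, ← sq_abs]
  rcases (abs_nonneg x).eq_or_lt with h | h
  · rw [← h]; positivity
  · exact pow_le_pow_right₀ (by omega) hp2

lemma one_le_poissonRosenthalConst {p : ℕ} (hp : Even p) (hp2 : 2 ≤ p) :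
    1 ≤ poissonRosenthalConst p := by
  rw [← hasSum_poisson_sub_one_sq.tsum_eq]
  refine hasSum_poisson_sub_one_sq.summable.tsum_le_tsum (fun n => ?_) (summable_poisson_mul_pow p)
  have hint : ((n : ℤ) - 1) ^ 2 ≤ ((n : ℤ) - 1) ^ p := Int.sq_le_pow_of_even _ hp hp2
  exact mul_le_mul_of_nonneg_left (by exact_mod_cast hint) (by positivity)

lemma sq_sum_mul_le_of_sum_eq_one {ι : Type*} {s : Finset ι} {w d : ι → ℝ}
    (hw0 : ∀ i ∈ s, 0 ≤ w i) (hw1 : ∑ i ∈ s, w i = 1) :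
    (∑ i ∈ s, w i * d i) ^ 2 ≤ ∑ i ∈ s, d i ^ 2 := by
  calc (∑ i ∈ s, w i * d i) ^ 2 ≤ ∑ i ∈ s, w i * d i ^ 2 :=
        (even_two.convexOn_pow (𝕜 := ℝ)).map_sum_le hw0 hw1 (fun _ _ => Set.mem_univ _)
    _ ≤ ∑ i ∈ s, d i ^ 2 := sum_le_sum fun i hi =>
        mul_le_of_le_one_left (sq_nonneg _) (hw1 ▸ single_le_sum hw0 hi)

lemma sq_mul_sq_sum_mul_le_of_mul_sum_sq_le {ι : Type*} [Fintype ι] {ξ lamBar : ℝ} (hξ : 0 < ξ)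
    {v g a : ι → ℝ} (hvg : ξ * ∑ i, v i ^ 2 ≤ ∑ i, v i * g i) (ha : ∀ i, |a i| ≤ lamBar) :
    ξ ^ 2 * (∑ i, v i * a i) ^ 2 ≤ Fintype.card ι * lamBar ^ 2 * ∑ i, g i ^ 2 := by
  set A := ∑ i, v i ^ 2
  set G := ∑ i, g i ^ 2
  have hA : 0 ≤ A := sum_nonneg fun i _ => sq_nonneg _
  have hva : (∑ i, v i * a i) ^ 2 ≤ A * (Fintype.card ι * lamBar ^ 2) := by
    refine (sum_mul_sq_le_sq_mul_sq _ v a).trans (mul_le_mul_of_nonneg_left ?_ hA)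
    calc ∑ i, a i ^ 2 ≤ ∑ _i : ι, lamBar ^ 2 :=
          sum_le_sum fun i _ => sq_le_sq' (abs_le.mp (ha i)).1 (abs_le.mp (ha i)).2
      _ = _ := by simp
  have hvg2 : (ξ * A) ^ 2 ≤ A * G :=
    pow_le_pow_left₀ (by positivity) hvg 2 |>.trans (sum_mul_sq_le_sq_mul_sq _ v g)
  have hξA : ξ ^ 2 * A ≤ G := by
    rcases hA.eq_or_lt with h0 | hpos
    · rw [← h0, mul_zero]; exact sum_nonneg fun i _ => sq_nonneg _
    · nlinarith
  calc ξ ^ 2 * (∑ i, v i * a i) ^ 2 ≤ ξ ^ 2 * (A * (Fintype.card ι * lamBar ^ 2)) := by gcongr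
    _ = (ξ ^ 2 * A) * (Fintype.card ι * lamBar ^ 2) := by ring
    _ ≤ G * (Fintype.card ι * lamBar ^ 2) := by gcongr
    _ = _ := by ring

lemma sum_mul_sum_mul_comm {κ ν : Type*} [Fintype κ] [Fintype ν] (w : κ → ℝ) (Z : κ → ν → ℝ)
    (c : ν → ℝ) : ∑ j, w j * ∑ k, Z j k * c k = ∑ k, (∑ j, w j * Z j k) * c k := by
  simp only [mul_sum, sum_mul]
  rw [sum_comm]
  exact sum_congr rfl fun _ _ => sum_congr rfl fun _ _ => by ring

lemma sqrt_two_mul_mul_div_le {J : ℕ} (hJ : 2 ≤ J) (m T : ℝ) (hT : 0 ≤ T) :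
    √(2 * J * m / T) ≤ J * (√m / √T) := by
  have hJ' : (2 : ℝ) ≤ J := by exact_mod_cast hJ
  rw [mul_div_assoc, Real.sqrt_mul (by positivity), Real.sqrt_div' m hT]
  gcongr
  calc √(2 * (J : ℝ)) ≤ √((J : ℝ) ^ 2) := Real.sqrt_le_sqrt (by nlinarith)
    _ = J := Real.sqrt_sq (by positivity)

lemma mul_mul_le_mul_mul_max {J C K x : ℝ} (hJ : 0 ≤ J) (hC : 1 ≤ C) (hK : 0 ≤ K) (hx : 0 ≤ x)
    (y : ℝ) : J * (K * x) ≤ J * C * K * max y x :=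
  calc J * (K * x) = J * 1 * K * x := by ring
    _ ≤ J * C * K * max y x := by gcongr; exact le_max_right y x

noncomputable def factorAverage {ι : Type*} (T0 : ℕ) (lam : ℕ → ι → ℝ) (u : ℕ → ℝ) (i : ι) : ℝ :=
  (T0 : ℝ)⁻¹ * ∑ s ∈ Icc 1 T0, lam s i * u s

lemma factorAverage_congr {ι : Type*} {T0 : ℕ} {lam : ℕ → ι → ℝ} {u u' : ℕ → ℝ}
    (h : ∀ s ∈ Icc 1 T0, u s = u' s) (i : ι) :
    factorAverage T0 lam u i = factorAverage T0 lam u' i := by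
  simp only [factorAverage]
  rw [sum_congr rfl fun s hs => by rw [h s hs]]

lemma sum_mul_factorAverage_dot {ι : Type*} [Fintype ι] (T0 : ℕ) (lam : ℕ → ι → ℝ) (v : ι → ℝ) :
    ∑ i, v i * factorAverage T0 lam (fun s => ∑ i', v i' * lam s i') i
      = (T0 : ℝ)⁻¹ * ∑ s ∈ Icc 1 T0, (∑ i, v i * lam s i) ^ 2 := by
  simp only [factorAverage, mul_sum, sq, sum_mul]
  rw [sum_comm]
  exact sum_congr rfl fun s _ => sum_congr rfl fun i _ => sum_congr rfl fun i' _ => by ring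

lemma factorAverage_sum_mul_sub {ι κ : Type*} {s : Finset κ} {w : κ → ℝ} (hw1 : ∑ j ∈ s, w j = 1)
    (T0 : ℕ) (lam : ℕ → ι → ℝ) (a : κ → ℕ → ℝ) (b : ℕ → ℝ) (i : ι) :
    factorAverage T0 lam (fun t => ∑ j ∈ s, w j * a j t - b t) i
      = ∑ j ∈ s, w j * factorAverage T0 lam (fun t => a j t - b t) i := by
  have hb : ∀ t, ∑ j ∈ s, w j * a j t - b t = ∑ j ∈ s, w j * (a j t - b t) := fun t => by
    simp only [mul_sub, sum_sub_distrib, ← sum_mul, hw1, one_mul]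
  simp only [factorAverage, hb, mul_sum]
  rw [sum_comm]
  exact sum_congr rfl fun j _ => sum_congr rfl fun t _ => by ring

lemma sq_sum_mul_le_of_pretreatment_fit {ι κ : Type*} [Fintype ι] [Fintype κ] {T0 : ℕ}
    {ξ lamBar : ℝ} (hξ : 0 < ξ) {lam : ℕ → ι → ℝ} {w : κ → ℝ} (hw0 : ∀ j, 0 ≤ w j)
    (hw1 : ∑ j, w j = 1) {v a : ι → ℝ} {e : κ → ℕ → ℝ} {e0 : ℕ → ℝ}
    (hfit : ∀ s ∈ Icc 1 T0, ∑ i, v i * lam s i = ∑ j, w j * e j s - e0 s)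
    (heig : ξ * ∑ i, v i ^ 2 ≤ (T0 : ℝ)⁻¹ * ∑ s ∈ Icc 1 T0, (∑ i, v i * lam s i) ^ 2)
    (ha : ∀ i, |a i| ≤ lamBar) :
    (∑ i, v i * a i) ^ 2 ≤ Fintype.card ι * lamBar ^ 2 / ξ ^ 2 *
      ∑ i, ∑ j, factorAverage T0 lam (fun s => e j s - e0 s) i ^ 2 := by
  have hg : ∀ i, factorAverage T0 lam (fun s => ∑ i', v i' * lam s i') i
      = ∑ j, w j * factorAverage T0 lam (fun s => e j s - e0 s) i := fun i => by
    rw [factorAverage_congr hfit, factorAverage_sum_mul_sub hw1]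
  have hvg := sq_mul_sq_sum_mul_le_of_mul_sum_sq_le hξ
    (heig.trans_eq (sum_mul_factorAverage_dot T0 lam v).symm) ha
  rw [div_mul_eq_mul_div, le_div_iff₀ (by positivity), mul_comm]
  refine hvg.trans (mul_le_mul_of_nonneg_left (sum_le_sum fun i _ => ?_) (by positivity))
  rw [hg]
  exact sq_sum_mul_le_of_sum_eq_one (fun j _ => hw0 j) hw1

lemma eq_zero_of_pretreatment_dot_eq_zero {ι : Type*} [Fintype ι] {T0 : ℕ} {ξ : ℝ} (hξ : 0 < ξ)
    {lam : ℕ → ι → ℝ} {c : ι → ℝ}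
    (heig : ξ * ∑ i, c i ^ 2 ≤ (T0 : ℝ)⁻¹ * ∑ s ∈ Icc 1 T0, (∑ i, c i * lam s i) ^ 2)
    (hc : ∀ s ∈ Icc 1 T0, ∑ i, c i * lam s i = 0) : c = 0 := by
  have h0 : ∑ s ∈ Icc 1 T0, (∑ i, c i * lam s i) ^ 2 = 0 :=
    sum_eq_zero fun s hs => by rw [hc s hs, zero_pow two_ne_zero]
  rw [h0, mul_zero, ← mul_zero ξ] at heig
  have hsq : ∑ i, c i ^ 2 = 0 :=
    le_antisymm (le_of_mul_le_mul_left heig hξ) (sum_nonneg fun i _ => sq_nonneg _)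
  funext i
  exact pow_eq_zero_iff two_ne_zero |>.mp
    ((sum_eq_zero_iff_of_nonneg fun i _ => sq_nonneg (c i)).mp hsq i (mem_univ i))

def loadingGap {J : ℕ} {ι : Type*} (μ : Fin (J + 1) → ι → ℝ) (w : Fin J → ℝ)
    (i : ι) : ℝ :=
  μ 0 i - ∑ j, w j * μ j.succ i

lemma sub_sum_mul_eq_loadingGap {J : ℕ} {ι κ : Type*} [Fintype ι] [Fintype κ] {w : Fin J → ℝ}
    {X : Fin (J + 1) → κ → ℝ} (hX : ∀ k, ∑ j, w j * X j.succ k = X 0 k)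
    (μ : Fin (J + 1) → ι → ℝ) (β : κ → ℝ) (l : ι → ℝ) {Y e : Fin (J + 1) → ℝ}
    (hY : ∀ j, Y j = ∑ k, X j k * β k + ∑ i, μ j i * l i + e j) :
    Y 0 - ∑ j, w j * Y j.succ = ∑ i, loadingGap μ w i * l i + (e 0 - ∑ j, w j * e j.succ) := by
  have hsplit : ∑ j, w j * Y j.succ = ∑ j, w j * ∑ k, X j.succ k * β k
      + ∑ j, w j * ∑ i, μ j.succ i * l i + ∑ j, w j * e j.succ := by
    simp only [hY, mul_add, sum_add_distrib]
  rw [hsplit, sum_mul_sum_mul_comm, sum_mul_sum_mul_comm, hY 0]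
  simp only [hX, loadingGap, sub_mul, sum_sub_distrib]
  ring

lemma ae_pretreatment_fit_of_ae_fit {Ω : Type*} [MeasurableSpace Ω] {P : Measure Ω}
    {J T0 : ℕ} {ι κ : Type*} [Fintype ι] [Fintype κ] {X : Fin (J + 1) → κ → ℝ}
    {μ : Fin (J + 1) → ι → ℝ} {β : ℕ → κ → ℝ} {lam : ℕ → ι → ℝ} {ε Y0 : Fin (J + 1) → ℕ → Ω → ℝ}
    {W : Fin J → Ω → ℝ}
    (hY0 : ∀ j s ω, Y0 j s ω = ∑ k, X j k * β s k + ∑ i, μ j i * lam s i + ε j s ω)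
    (hfit : ∀ᵐ ω ∂P, (∀ j, 0 ≤ W j ω) ∧ ∑ j, W j ω = 1 ∧
      (∀ k, ∑ j, W j ω * X j.succ k = X 0 k) ∧
      ∀ s ∈ Icc 1 T0, ∑ j, W j ω * Y0 j.succ s ω = Y0 0 s ω) (t : ℕ) :
    ∀ᵐ ω ∂P, ((∀ j, 0 ≤ W j ω) ∧ ∑ j, W j ω = 1 ∧
      ∀ s ∈ Icc 1 T0, ∑ i, loadingGap μ (fun j => W j ω) i * lam s i
        = ∑ j, W j ω * ε j.succ s ω - ε 0 s ω) ∧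
      Y0 0 t ω - ∑ j, W j ω * Y0 j.succ t ω
        = ∑ i, loadingGap μ (fun j => W j ω) i * lam t i + (ε 0 t ω - ∑ j, W j ω * ε j.succ t ω) :=
  hfit.mono fun ω ⟨h0, h1, hX, hY⟩ => ⟨⟨h0, h1, fun s hs => by
    have := sub_sum_mul_eq_loadingGap hX μ (β s) (lam s) (fun j => hY0 j s ω)
    rw [hY s hs, sub_self] at this
    linarith⟩, sub_sum_mul_eq_loadingGap hX μ (β t) (lam t) (fun j => hY0 j t ω)⟩

lemma iSup_comap_pretreatment_le {Ω κ : Type*} {T0 t : ℕ} (ε : κ → ℕ → Ω → ℝ) :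
    ⨆ (j : κ) (s ∈ Icc 1 T0), MeasurableSpace.comap (ε j s) inferInstance
      ≤ ⨆ js ∈ {js : κ × {s : ℕ // s ∈ Icc 1 T0 ∨ s = t} | js.2.1 ∈ Icc 1 T0},
          MeasurableSpace.comap (ε js.1 js.2.1) inferInstance :=
  iSup_le fun j => iSup₂_le fun s hs =>
    le_biSup (fun js : κ × {s : ℕ // s ∈ Icc 1 T0 ∨ s = t} =>
      MeasurableSpace.comap (ε js.1 js.2.1) inferInstance)
      (show (j, ⟨s, Or.inl hs⟩) ∈ {js : κ × {s : ℕ // s ∈ Icc 1 T0 ∨ s = t} | js.2.1 ∈ Icc 1 T0}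
        from hs)

section Measure

variable {Ω : Type*} [MeasurableSpace Ω] {P : Measure Ω}

lemma integral_add_eq_of_integral_eq_zero {V N : Ω → ℝ} (hN : Integrable N P)
    (hN0 : ∫ ω, N ω ∂P = 0) : ∫ ω, (V ω + N ω) ∂P = ∫ ω, V ω ∂P := by
  by_cases hV : Integrable V P
  · rw [integral_add hV hN, hN0, add_zero]
  · rw [integral_undef hV,
      integral_undef fun h => hV ((h.sub hN).congr (ae_of_all _ fun ω => by simp))]

lemma memLp_factorAverage {ι : Type*} {T0 : ℕ} (lam : ℕ → ι → ℝ) {ζ : ℕ → Ω → ℝ}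
    (hζ : ∀ s ∈ Icc 1 T0, MemLp (ζ s) 2 P) (i : ι) :
    MemLp (fun ω => factorAverage T0 lam (fun s => ζ s ω) i) 2 P :=
  (memLp_finsetSum _ fun s hs => (hζ s hs).const_mul (lam s i)).const_mul _

lemma sum_integral_sq_le_of_eq_iSup {κ : Type*} [Finite κ] {T0 : ℕ} (hT0 : 0 < T0)
    {ε : κ → ℕ → Ω → ℝ} {m2 : ℝ}
    (hm2 : m2 = ⨆ j, (T0 : ℝ)⁻¹ * ∑ s ∈ Icc 1 T0, ∫ ω, |ε j s ω| ^ 2 ∂P) (j : κ) :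
    ∑ s ∈ Icc 1 T0, ∫ ω, ε j s ω ^ 2 ∂P ≤ T0 * m2 := by
  have hle := le_ciSup (Set.finite_range fun j =>
    (T0 : ℝ)⁻¹ * ∑ s ∈ Icc 1 T0, ∫ ω, |ε j s ω| ^ 2 ∂P).bddAbove j
  rw [← hm2] at hle
  simp only [sq_abs] at hle
  exact (inv_mul_le_iff₀ (by exact_mod_cast hT0)).mp hle

lemma integrable_of_ae_nonneg_of_sum_eq_one [IsFiniteMeasure P] {κ : Type*} [Fintype κ]
    {W : κ → Ω → ℝ} (hW : ∀ j, AEStronglyMeasurable (W j) P)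
    (h : ∀ᵐ ω ∂P, (∀ j, 0 ≤ W j ω) ∧ ∑ j, W j ω = 1) (j : κ) : Integrable (W j) P :=
  (integrable_const (1 : ℝ)).mono' (hW j) (h.mono fun ω ⟨h0, h1⟩ => by
    rw [Real.norm_of_nonneg (h0 j), ← h1]
    exact single_le_sum (fun j _ => h0 j) (mem_univ j))

lemma ProbabilityTheory.iIndepFun.indepFun_of_measurable_iSup {ι γ : Type*} {β : ι → Type*}
    {mβ : ∀ i, MeasurableSpace (β i)} [MeasurableSpace γ] {X : ∀ i, Ω → β i}
    (hX : ∀ i, Measurable (X i)) (h : iIndepFun X P) {S : Set ι} {i : ι} (hi : i ∉ S)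
    {Y : Ω → γ} (hY : Measurable[⨆ j ∈ S, (mβ j).comap (X j)] Y) : IndepFun Y (X i) P := by
  have hS : Disjoint S {i} := Set.disjoint_singleton_right.mpr hi
  have hST := indep_iSup_of_disjoint (fun j => (hX j).comap_le)
    ((iIndepFun_iff_iIndep _ _ _).mp h) hS
  refine (IndepFun_iff_Indep _ _ _).mpr (indep_of_indep_of_le_right
    (indep_of_indep_of_le_left hST hY.comap_le) ?_)
  exact le_biSup (fun j => (mβ j).comap (X j)) (Set.mem_singleton i)

lemma indepFun_of_measurable_pretreatment {κ γ : Type*} [MeasurableSpace γ] {T0 t : ℕ}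
    (ht : T0 < t) {ε : κ → ℕ → Ω → ℝ} (hmeas : ∀ j s, Measurable (ε j s))
    (hind : iIndepFun (fun js : κ × {s : ℕ // s ∈ Icc 1 T0 ∨ s = t} => ε js.1 js.2.1) P)
    {Y : Ω → γ} (hY : Measurable[⨆ (j : κ) (s ∈ Icc 1 T0),
      MeasurableSpace.comap (ε j s) inferInstance] Y) (j : κ) : IndepFun Y (ε j t) P := by
  have hj : ((j, ⟨t, Or.inr rfl⟩) : κ × {s : ℕ // s ∈ Icc 1 T0 ∨ s = t})
      ∉ {js : κ × {s : ℕ // s ∈ Icc 1 T0 ∨ s = t} | js.2.1 ∈ Icc 1 T0} := by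
    simp only [Set.mem_ofPred_eq, mem_Icc]; omega
  have hY' : Measurable[⨆ js ∈ {js : κ × {s : ℕ // s ∈ Icc 1 T0 ∨ s = t} | js.2.1 ∈ Icc 1 T0},
      MeasurableSpace.comap (ε js.1 js.2.1) inferInstance] Y :=
    Measurable.mono hY (iSup_comap_pretreatment_le ε) le_rfl
  exact ProbabilityTheory.iIndepFun.indepFun_of_measurable_iSup (mβ := fun _ => inferInstance)
    (X := fun js : κ × {s : ℕ // s ∈ Icc 1 T0 ∨ s = t} => ε js.1 js.2.1)
    (fun js => hmeas js.1 js.2.1) hind hj hY'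

lemma iIndepFun_pretreatment {κ : Type*} {T0 t : ℕ} {ε : κ → ℕ → Ω → ℝ}
    (hind : iIndepFun (fun js : κ × {s : ℕ // s ∈ Icc 1 T0 ∨ s = t} => ε js.1 js.2.1) P) :
    iIndepFun (fun js : κ × Icc 1 T0 => ε js.1 js.2) P :=
  hind.precomp (g := fun js : κ × Icc 1 T0 =>
      ((js.1, ⟨js.2.1, Or.inl js.2.2⟩) : κ × {s : ℕ // s ∈ Icc 1 T0 ∨ s = t}))
    fun a b h => by
      simp only [Prod.mk.injEq, Subtype.mk.injEq] at h
      exact Prod.ext h.1 (Subtype.ext h.2)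

lemma integral_add_sub_sum_mul_eq_of_indepFun {κ : Type*} [Fintype κ] {V e0 : Ω → ℝ}
    {W e : κ → Ω → ℝ} (he0 : Integrable e0 P) (he0m : ∫ ω, e0 ω ∂P = 0)
    (hW : ∀ j, Integrable (W j) P) (he : ∀ j, Integrable (e j) P)
    (hem : ∀ j, ∫ ω, e j ω ∂P = 0) (hind : ∀ j, IndepFun (W j) (e j) P) :
    ∫ ω, (V ω + (e0 ω - ∑ j, W j ω * e j ω)) ∂P = ∫ ω, V ω ∂P := by
  have hWe : ∀ j ∈ (univ : Finset κ), Integrable (fun ω => W j ω * e j ω) P :=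
    fun j _ => (hind j).integrable_mul (hW j) (he j)
  refine integral_add_eq_of_integral_eq_zero (he0.sub (integrable_finsetSum _ hWe)) ?_
  rw [integral_sub he0 (integrable_finsetSum _ hWe), integral_finsetSum _ hWe, he0m, zero_sub,
    neg_eq_zero]
  exact sum_eq_zero fun j _ => by
    rw [(hind j).integral_fun_mul_eq_mul_integral (hW j).1 (he j).1, hem j, mul_zero]

variable [IsProbabilityMeasure P]

lemma integral_eq_of_ae_eq_add_noise {J T0 t : ℕ} (ht : T0 < t) {ε : Fin (J + 1) → ℕ → Ω → ℝ}
    (hmeas : ∀ j s, Measurable (ε j s))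
    (hind : iIndepFun (fun js : Fin (J + 1) × {s : ℕ // s ∈ Icc 1 T0 ∨ s = t} =>
      ε js.1 js.2.1) P)
    (hint : ∀ j, Integrable (ε j t) P) (hmean : ∀ j, ∫ ω, ε j t ω ∂P = 0) {W : Fin J → Ω → ℝ}
    (hWmeas : ∀ j, Measurable[⨆ (j' : Fin (J + 1)) (s ∈ Icc 1 T0),
      MeasurableSpace.comap (ε j' s) inferInstance] (W j))
    (hW : ∀ᵐ ω ∂P, (∀ j, 0 ≤ W j ω) ∧ ∑ j, W j ω = 1) {Y V : Ω → ℝ}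
    (hY : ∀ᵐ ω ∂P, Y ω = V ω + (ε 0 t ω - ∑ j, W j ω * ε j.succ t ω)) :
    ∫ ω, Y ω ∂P = ∫ ω, V ω ∂P := by
  have hWm : ∀ j, Measurable (W j) := fun j =>
    (hWmeas j).mono (iSup_le fun j' => iSup₂_le fun s _ => (hmeas j' s).comap_le) le_rfl
  rw [integral_congr_ae hY]
  exact integral_add_sub_sum_mul_eq_of_indepFun (hint 0) (hmean 0)
    (integrable_of_ae_nonneg_of_sum_eq_one (fun j => (hWm j).aestronglyMeasurable) hW)
    (fun j => hint j.succ) (fun j => hmean j.succ)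
    (fun j => indepFun_of_measurable_pretreatment ht hmeas hind (hWmeas j) j.succ)


lemma integral_abs_le_sqrt_integral_of_sq_le {h G : Ω → ℝ} (hh : AEStronglyMeasurable h P)
    (hG : Integrable G P) (hle : ∀ᵐ ω ∂P, h ω ^ 2 ≤ G ω) :
    ∫ ω, |h ω| ∂P ≤ √(∫ ω, G ω ∂P) := by
  have hsq : Integrable (fun ω => h ω ^ 2) P :=
    hG.mono' (hh.pow 2) (hle.mono fun ω hω => by rwa [Real.norm_of_nonneg (sq_nonneg _)])
  have habs : MemLp (fun ω => |h ω|) 2 P := ((memLp_two_iff_integrable_sq hh).2 hsq).abs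
  have hvar := variance_eq_sub habs
  have hvar0 := variance_nonneg (fun ω => |h ω|) P
  simp only [Pi.pow_apply, sq_abs] at hvar
  refine Real.le_sqrt_of_sq_le ?_
  have := integral_mono_ae hsq hG hle
  linarith

lemma integral_sq_sum_eq_sum_sq_mul_integral_sq {ι : Type*} {S : Finset ι} {ζ : ι → Ω → ℝ}
    (a : ι → ℝ) (hL2 : ∀ i ∈ S, MemLp (ζ i) 2 P) (hmean : ∀ i ∈ S, ∫ ω, ζ i ω ∂P = 0)
    (hind : Set.Pairwise ↑S fun i j => IndepFun (ζ i) (ζ j) P) :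
    ∫ ω, (∑ i ∈ S, a i * ζ i ω) ^ 2 ∂P = ∑ i ∈ S, a i ^ 2 * ∫ ω, ζ i ω ^ 2 ∂P := by
  have hL2' : ∀ i ∈ S, MemLp (fun ω => a i * ζ i ω) 2 P := fun i hi => (hL2 i hi).const_mul _
  have hind' : Set.Pairwise ↑S fun i j =>
      IndepFun (fun ω => a i * ζ i ω) (fun ω => a j * ζ j ω) P :=
    fun i hi j hj hij => (hind hi hj hij).comp (measurable_const_mul _) (measurable_const_mul _)
  have hvar := IndepFun.variance_sum hL2' hind'
  have hsum0 : ∫ ω, (∑ i ∈ S, fun ω => a i * ζ i ω) ω ∂P = 0 := by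
    simp only [Finset.sum_apply]
    rw [integral_finsetSum _ fun i hi => (hL2' i hi).integrable one_le_two]
    exact sum_eq_zero fun i hi => by rw [integral_const_mul, hmean i hi, mul_zero]
  rw [variance_of_integral_eq_zero
    (Finset.aemeasurable_sum _ fun i hi => (hL2' i hi).aemeasurable) hsum0] at hvar
  simp only [Finset.sum_apply] at hvar
  rw [hvar]
  refine sum_congr rfl fun i hi => ?_
  rw [variance_const_mul, variance_of_integral_eq_zero (hL2 i hi).aemeasurable (hmean i hi)]

lemma ProbabilityTheory.IndepFun.integral_sub_sq {X Y : Ω → ℝ} (hXY : IndepFun X Y P)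
    (hX : MemLp X 2 P) (hY : MemLp Y 2 P) (hXm : ∫ ω, X ω ∂P = 0) (hYm : ∫ ω, Y ω ∂P = 0) :
    ∫ ω, (X ω - Y ω) ^ 2 ∂P = ∫ ω, X ω ^ 2 ∂P + ∫ ω, Y ω ^ 2 ∂P := by
  have hXY' : IndepFun X (-Y) P := hXY.comp measurable_id measurable_neg
  have hvar := hXY'.variance_add hX hY.neg
  rw [variance_neg, ← sub_eq_add_neg] at hvar
  have hsub : ∫ ω, (X - Y) ω ∂P = 0 := by
    simp only [Pi.sub_apply]
    rw [integral_sub (hX.integrable one_le_two) (hY.integrable one_le_two), hXm, hYm, sub_zero]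
  rwa [variance_of_integral_eq_zero (hX.sub hY).aemeasurable hsub,
    variance_of_integral_eq_zero hX.aemeasurable hXm,
    variance_of_integral_eq_zero hY.aemeasurable hYm] at hvar

lemma memLp_two_of_integrable_abs_pow {e : Ω → ℝ} (he : AEStronglyMeasurable e P) {p : ℕ}
    (hp : 2 ≤ p) (hint : Integrable (fun ω => |e ω| ^ p) P) : MemLp e 2 P := by
  have h := integrable_norm_rpow_of_le he (p := 2) (q := p) zero_le_two (Nat.cast_nonneg p)
    (by exact_mod_cast hp) (by simpa only [Real.norm_eq_abs, Real.rpow_natCast] using hint)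
  rw [memLp_two_iff_integrable_sq he]
  simpa only [Real.norm_eq_abs, Real.rpow_two, sq_abs] using h

lemma integral_sq_factorAverage_le {ι : Type*} {T0 : ℕ} {lamBar : ℝ} {lam : ℕ → ι → ℝ}
    {ζ : ℕ → Ω → ℝ} (hlam : ∀ s ∈ Icc 1 T0, ∀ i, |lam s i| ≤ lamBar)
    (hζ : ∀ s ∈ Icc 1 T0, MemLp (ζ s) 2 P) (hmean : ∀ s ∈ Icc 1 T0, ∫ ω, ζ s ω ∂P = 0)
    (hind : Set.Pairwise ↑(Icc 1 T0) fun s s' => IndepFun (ζ s) (ζ s') P) (i : ι) :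
    ∫ ω, factorAverage T0 lam (fun s => ζ s ω) i ^ 2 ∂P
      ≤ lamBar ^ 2 / T0 ^ 2 * ∑ s ∈ Icc 1 T0, ∫ ω, ζ s ω ^ 2 ∂P := by
  simp only [factorAverage, mul_sum, ← mul_assoc]
  rw [integral_sq_sum_eq_sum_sq_mul_integral_sq _ hζ hmean hind]
  refine sum_le_sum fun s hs => mul_le_mul_of_nonneg_right ?_ (integral_nonneg fun _ => sq_nonneg _)
  rw [mul_pow, inv_pow, div_eq_inv_mul]
  exact mul_le_mul_of_nonneg_left
    (sq_le_sq' (abs_le.mp (hlam s hs i)).1 (abs_le.mp (hlam s hs i)).2) (by positivity)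

lemma integral_sq_factorAverage_sub_le {ι κ : Type*} {T0 : ℕ} {lamBar m2 : ℝ}
    {lam : ℕ → ι → ℝ} {ε : κ → ℕ → Ω → ℝ}
    (hlam : ∀ s ∈ Icc 1 T0, ∀ i, |lam s i| ≤ lamBar)
    (hind : iIndepFun (fun js : κ × Icc 1 T0 => ε js.1 js.2) P)
    (hmeas : ∀ j s, Measurable (ε j s))
    (hL2 : ∀ j, ∀ s ∈ Icc 1 T0, MemLp (ε j s) 2 P)
    (hmean : ∀ j, ∀ s ∈ Icc 1 T0, ∫ ω, ε j s ω ∂P = 0)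
    (hm2 : ∀ j, ∑ s ∈ Icc 1 T0, ∫ ω, ε j s ω ^ 2 ∂P ≤ T0 * m2) {j k : κ} (hjk : j ≠ k) (i : ι) :
    ∫ ω, factorAverage T0 lam (fun s => ε j s ω - ε k s ω) i ^ 2 ∂P ≤ 2 * lamBar ^ 2 * m2 / T0 := by
  have hpair : ∀ s (hs : s ∈ Icc 1 T0), IndepFun (ε j s) (ε k s) P := fun s hs =>
    hind.indepFun (i := (j, ⟨s, hs⟩)) (j := (k, ⟨s, hs⟩)) (by simp [hjk])
  have hdiff : Set.Pairwise ↑(Icc 1 T0) fun s s' =>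
      IndepFun (fun ω => ε j s ω - ε k s ω) (fun ω => ε j s' ω - ε k s' ω) P := by
    intro s hs s' hs' hss'
    have hne : ∀ a b : κ, ((a, ⟨s, hs⟩) : κ × Icc 1 T0) ≠ (b, ⟨s', hs'⟩) := fun a b h =>
      hss' (congrArg (fun x : κ × Icc 1 T0 => (x.2 : ℕ)) h)
    exact (hind.indepFun_prodMk_prodMk (fun js => hmeas js.1 js.2) (j, ⟨s, hs⟩) (k, ⟨s, hs⟩)
      (j, ⟨s', hs'⟩) (k, ⟨s', hs'⟩) (hne _ _) (hne _ _) (hne _ _) (hne _ _)).comp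
      (measurable_fst.sub measurable_snd) (measurable_fst.sub measurable_snd)
  have hsum : ∑ s ∈ Icc 1 T0, ∫ ω, (ε j s ω - ε k s ω) ^ 2 ∂P ≤ 2 * (T0 * m2) := by
    rw [sum_congr rfl fun s hs => (hpair s hs).integral_sub_sq (hL2 j s hs) (hL2 k s hs)
      (hmean j s hs) (hmean k s hs), sum_add_distrib, two_mul]
    exact add_le_add (hm2 j) (hm2 k)
  calc _ ≤ lamBar ^ 2 / T0 ^ 2 * ∑ s ∈ Icc 1 T0, ∫ ω, (ε j s ω - ε k s ω) ^ 2 ∂P :=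
        integral_sq_factorAverage_le (ζ := fun s ω => ε j s ω - ε k s ω) hlam
          (fun s hs => (hL2 j s hs).sub (hL2 k s hs))
          (fun s hs => by rw [integral_sub ((hL2 j s hs).integrable one_le_two)
            ((hL2 k s hs).integrable one_le_two), hmean j s hs, hmean k s hs, sub_zero]) hdiff i
    _ ≤ lamBar ^ 2 / T0 ^ 2 * (2 * (T0 * m2)) := by gcongr
    _ = 2 * lamBar ^ 2 * m2 / T0 := by
        rcases eq_or_ne (T0 : ℝ) 0 with h0 | h0
        · simp [h0]
        · field_simp

lemma integral_sum_loadingGap_mul_eq_zero_of_single_control {ι : Type*} [Fintype ι] {T0 : ℕ}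
    {ξ : ℝ} (hξ : 0 < ξ) {lam : ℕ → ι → ℝ}
    (heig : ∀ u : ι → ℝ, ξ * ∑ i, u i ^ 2 ≤ (T0 : ℝ)⁻¹ * ∑ s ∈ Icc 1 T0, (∑ i, u i * lam s i) ^ 2)
    {μ : Fin 2 → ι → ℝ} {W : Fin 1 → Ω → ℝ} {ε : Fin 2 → ℕ → Ω → ℝ}
    (hint : ∀ j, ∀ s ∈ Icc 1 T0, Integrable (ε j s) P)
    (hmean : ∀ j, ∀ s ∈ Icc 1 T0, ∫ ω, ε j s ω ∂P = 0)
    (hfit : ∀ᵐ ω ∂P, W 0 ω = 1 ∧ ∀ s ∈ Icc 1 T0,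
      ∑ i, loadingGap μ (fun j => W j ω) i * lam s i = ∑ j, W j ω * ε j.succ s ω - ε 0 s ω)
    (a : ι → ℝ) : ∫ ω, ∑ i, loadingGap μ (fun j => W j ω) i * a i ∂P = 0 := by
  have hgap : ∀ w : Fin 1 → ℝ, w 0 = 1 → loadingGap μ w = fun i => μ 0 i - μ 1 i := fun w hw => by
    funext i; simp [loadingGap, hw]
  have hdot : ∀ s ∈ Icc 1 T0, ∑ i, (μ 0 i - μ 1 i) * lam s i = 0 := fun s hs => by
    have hae : ∀ᵐ ω ∂P, ∑ i, (μ 0 i - μ 1 i) * lam s i = ε 1 s ω - ε 0 s ω :=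
      hfit.mono fun ω ⟨hW0, hfit⟩ => by
        simpa [hgap (fun j => W j ω) hW0, hW0] using hfit s hs
    have := integral_congr_ae hae
    rwa [integral_const, integral_sub (hint 1 s hs) (hint 0 s hs), hmean 1 s hs, hmean 0 s hs,
      sub_zero, probReal_univ, one_smul] at this
  have hzero : ∀ i, μ 0 i - μ 1 i = 0 :=
    congrFun (eq_zero_of_pretreatment_dot_eq_zero hξ (heig _) hdot)
  refine integral_eq_zero_of_ae (hfit.mono fun ω ⟨hW0, _⟩ => ?_)
  simp only [Pi.zero_apply, hgap (fun j => W j ω) hW0, hzero, zero_mul, sum_const_zero]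

lemma integral_abs_sum_mul_le_of_pretreatment_fit {ι : Type*} [Fintype ι] {J T0 : ℕ}
    {ξ lamBar m2 : ℝ} (hξ : 0 < ξ) {lam : ℕ → ι → ℝ} {a : ι → ℝ}
    (hlam : ∀ s ∈ Icc 1 T0, ∀ i, |lam s i| ≤ lamBar) (ha : ∀ i, |a i| ≤ lamBar)
    (heig : ∀ u : ι → ℝ, ξ * ∑ i, u i ^ 2 ≤ (T0 : ℝ)⁻¹ * ∑ s ∈ Icc 1 T0, (∑ i, u i * lam s i) ^ 2)
    {ε : Fin (J + 1) → ℕ → Ω → ℝ}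
    (hind : iIndepFun (fun js : Fin (J + 1) × Icc 1 T0 => ε js.1 js.2) P)
    (hmeas : ∀ j s, Measurable (ε j s)) (hL2 : ∀ j, ∀ s ∈ Icc 1 T0, MemLp (ε j s) 2 P)
    (hmean : ∀ j, ∀ s ∈ Icc 1 T0, ∫ ω, ε j s ω ∂P = 0)
    (hm2 : ∀ j, ∑ s ∈ Icc 1 T0, ∫ ω, ε j s ω ^ 2 ∂P ≤ T0 * m2)
    {W : Fin J → Ω → ℝ} {v : Ω → ι → ℝ} (hv : AEStronglyMeasurable (fun ω => ∑ i, v ω i * a i) P)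
    (hfit : ∀ᵐ ω ∂P, (∀ j, 0 ≤ W j ω) ∧ ∑ j, W j ω = 1 ∧
      ∀ s ∈ Icc 1 T0, ∑ i, v ω i * lam s i = ∑ j, W j ω * ε j.succ s ω - ε 0 s ω) :
    ∫ ω, |∑ i, v ω i * a i| ∂P ≤ lamBar ^ 2 * Fintype.card ι / ξ * √(2 * J * m2 / T0) := by
  set K := Fintype.card ι * lamBar ^ 2 / ξ ^ 2
  have hD : ∀ i (j : Fin J), Integrable
      (fun ω => factorAverage T0 lam (fun s => ε j.succ s ω - ε 0 s ω) i ^ 2) P := fun i j =>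
    (memLp_factorAverage lam (fun s hs => (hL2 _ s hs).sub (hL2 0 s hs)) i).integrable_sq
  have hDsum : Integrable (fun ω => ∑ i, ∑ j : Fin J,
      factorAverage T0 lam (fun s => ε j.succ s ω - ε 0 s ω) i ^ 2) P :=
    integrable_finsetSum _ fun i _ => integrable_finsetSum _ fun j _ => hD i j
  have hDbd : ∫ ω, ∑ i, ∑ j : Fin J,
      factorAverage T0 lam (fun s => ε j.succ s ω - ε 0 s ω) i ^ 2 ∂P
        ≤ Fintype.card ι * (J * (2 * lamBar ^ 2 * m2 / T0)) := by
    rw [integral_finsetSum _ fun i _ => integrable_finsetSum _ fun j _ => hD i j]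
    calc _ ≤ ∑ _i : ι, ∑ _j : Fin J, 2 * lamBar ^ 2 * m2 / T0 := sum_le_sum fun i _ => by
          rw [integral_finsetSum _ fun j _ => hD i j]
          exact sum_le_sum fun j _ => integral_sq_factorAverage_sub_le hlam hind hmeas hL2 hmean
            hm2 (Fin.succ_ne_zero j) i
      _ = _ := by simp
  calc ∫ ω, |∑ i, v ω i * a i| ∂P
      ≤ √(∫ ω, K * ∑ i, ∑ j : Fin J,
          factorAverage T0 lam (fun s => ε j.succ s ω - ε 0 s ω) i ^ 2 ∂P) :=
        integral_abs_le_sqrt_integral_of_sq_le hv (hDsum.const_mul K)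
          (hfit.mono fun ω ⟨hw0, hw1, hfit⟩ => sq_sum_mul_le_of_pretreatment_fit hξ hw0 hw1
            (e := fun j s => ε j.succ s ω) hfit (heig _) ha)
    _ ≤ √(K * (Fintype.card ι * (J * (2 * lamBar ^ 2 * m2 / T0)))) := by
        rw [integral_const_mul]; gcongr
    _ = lamBar ^ 2 * Fintype.card ι / ξ * √(2 * J * m2 / T0) := by
        rw [← Real.sqrt_sq (by positivity : 0 ≤ lamBar ^ 2 * Fintype.card ι / ξ), ← Real.sqrt_mul
          (sq_nonneg _)]
        congr 1
        simp only [K]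
        field_simp

end Measure

theorem synthetic_control_finite_sample_bias_bound_general
    {Ω : Type*} [MeasurableSpace Ω] (P : Measure Ω) [IsProbabilityMeasure P]
    (J T0 k f p : ℕ) (hJ : 0 < J) (hT0 : 0 < T0)
    (hp : Even p) (hp2 : 2 ≤ p)
    (t : ℕ) (ht : T0 < t)
    (lamBar ξ : ℝ) (hξ : 0 < ξ)
    (X : Fin (J + 1) → Fin k → ℝ) (μ : Fin (J + 1) → Fin f → ℝ)
    (β : ℕ → Fin k → ℝ) (lam : ℕ → Fin f → ℝ)
    (hlamBd : ∀ s, (s ∈ Finset.Icc 1 T0 ∨ s = t) → ∀ i, |lam s i| ≤ lamBar)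
    (heig : ∀ v : Fin f → ℝ,
      ξ * ∑ i, v i ^ 2 ≤
        (T0 : ℝ)⁻¹ * ∑ s ∈ Finset.Icc 1 T0, (∑ i, v i * lam s i) ^ 2)
    (ε : Fin (J + 1) → ℕ → Ω → ℝ)
    (hεmeas : ∀ j s, Measurable (ε j s))
    (hindep : iIndepFun
      (fun js : Fin (J + 1) × {s : ℕ // s ∈ Finset.Icc 1 T0 ∨ s = t} =>
        ε js.1 js.2.1) P)
    (hmean : ∀ j s, (s ∈ Finset.Icc 1 T0 ∨ s = t) → ∫ ω, ε j s ω ∂P = 0)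
    (hmom : ∀ j s, (s ∈ Finset.Icc 1 T0 ∨ s = t) → Integrable (fun ω => |ε j s ω| ^ p) P)
    (Y0 : Fin (J + 1) → ℕ → Ω → ℝ)
    (hY0 : ∀ j s ω,
      Y0 j s ω = (∑ i, X j i * β s i) + (∑ i, μ j i * lam s i) + ε j s ω)
    (W : Fin J → Ω → ℝ)
    (hWmeas : ∀ j,
      Measurable[⨆ (j' : Fin (J + 1)) (s ∈ Finset.Icc 1 T0),
        MeasurableSpace.comap (ε j' s) inferInstance] (W j))
    (hWfit : ∀ᵐ ω ∂P,
      (∀ j, 0 ≤ W j ω) ∧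
      (∑ j, W j ω) = 1 ∧
      (∀ i, ∑ j, W j ω * X j.succ i = X 0 i) ∧
      (∀ s ∈ Finset.Icc 1 T0, ∑ j, W j ω * Y0 j.succ s ω = Y0 0 s ω))
    (mbar2 mbarp : ℝ)
    (hmbar2 : mbar2 = ⨆ j : Fin (J + 1),
      (T0 : ℝ)⁻¹ * ∑ s ∈ Finset.Icc 1 T0, ∫ ω, |ε j s ω| ^ 2 ∂P) :
    |∫ ω, (Y0 0 t ω - ∑ j, W j ω * Y0 j.succ t ω) ∂P| ≤
      (J : ℝ) * poissonRosenthalConst p ^ ((1 : ℝ) / p) * (lamBar ^ 2 * f / ξ) *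
        max (mbarp ^ ((1 : ℝ) / p) / (T0 : ℝ) ^ (1 - 1 / (p : ℝ)))
          (Real.sqrt mbar2 / Real.sqrt T0) := by
  have hL2 : ∀ j s, (s ∈ Icc 1 T0 ∨ s = t) → MemLp (ε j s) 2 P := fun j s hs =>
    memLp_two_of_integrable_abs_pow (hεmeas j s).aestronglyMeasurable hp2 (hmom j s hs)
  have hWm : ∀ j, Measurable (W j) := fun j =>
    (hWmeas j).mono (iSup_le fun j' => iSup₂_le fun s _ => (hεmeas j' s).comap_le) le_rfl
  have hres := ae_pretreatment_fit_of_ae_fit hY0 hWfit t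
  have hbound := mul_mul_le_mul_mul_max (J.cast_nonneg (α := ℝ))
    (Real.one_le_rpow (one_le_poissonRosenthalConst hp hp2) (by positivity : (0 : ℝ) ≤ 1 / p))
    (by positivity : 0 ≤ lamBar ^ 2 * f / ξ) (by positivity : 0 ≤ √mbar2 / √T0)
    (mbarp ^ ((1 : ℝ) / p) / (T0 : ℝ) ^ (1 - 1 / (p : ℝ)))
  rw [integral_eq_of_ae_eq_add_noise ht hεmeas hindep
    (fun j => (hL2 j t (Or.inr rfl)).integrable one_le_two) (fun j => hmean j t (Or.inr rfl))
    hWmeas (hWfit.mono fun ω h => ⟨h.1, h.2.1⟩) (hres.mono fun ω h => h.2)]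
  -- `√(2J) ≤ J` fails for `J = 1`, where the bias vanishes instead.
  obtain rfl | hJ2 : J = 1 ∨ 2 ≤ J := by omega
  · rw [integral_sum_loadingGap_mul_eq_zero_of_single_control hξ heig
      (fun j s hs => (hL2 j s (Or.inl hs)).integrable one_le_two)
      (fun j s hs => hmean j s (Or.inl hs))
      (hres.mono fun ω h => ⟨by simpa using h.1.2.1, h.1.2.2⟩), abs_zero]
    exact le_trans (by positivity) hbound
  · calc _ ≤ ∫ ω, |∑ i, loadingGap μ (fun j => W j ω) i * lam t i| ∂P :=
          abs_integral_le_integral_abs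
      _ ≤ lamBar ^ 2 * f / ξ * √(2 * J * mbar2 / T0) := by
        simpa using integral_abs_sum_mul_le_of_pretreatment_fit hξ
          (fun s hs => hlamBd s (Or.inl hs)) (hlamBd t (Or.inr rfl)) heig
          (iIndepFun_pretreatment hindep) hεmeas (fun j s hs => hL2 j s (Or.inl hs))
          (fun j s hs => hmean j s (Or.inl hs)) (sum_integral_sq_le_of_eq_iSup hT0 hmbar2)
          (by simp only [loadingGap]; fun_prop) (hres.mono fun ω h => h.1)
      _ ≤ J * (lamBar ^ 2 * f / ξ * (√mbar2 / √T0)) := by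
        rw [mul_left_comm]
        exact mul_le_mul_of_nonneg_left (sqrt_two_mul_mul_div_le hJ2 _ _ (Nat.cast_nonneg _))
          (by positivity)
      _ ≤ _ := hbound

/-- Finite-sample bias bound for the synthetic control estimator in the
interactive fixed effects model (unit `0` of `Fin (J+1)` is the treated unit, controls
are `j.succ`):  under bounded factors, the eigenvalue condition, mutually independent
mean-zero shocks with finite `p`-th moments, and weights measurable with respect to the
pretreatment shocks that a.s. satisfy adding-up, non-negativity and exact pretreatment
fit,
`|E[Y⁰_{1,t} − ∑_j W_j Y⁰_{j,t}]|
   ≤ J C(p)^{1/p} (λ̄² f/ξ) max{m̄_p^{1/p}/T0^{1−1/p}, m̄_2^{1/2}/T0^{1/2}}`. -/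
theorem synthetic_control_finite_sample_bias_bound
    {Ω : Type*} [MeasurableSpace Ω] (P : Measure Ω) [IsProbabilityMeasure P]
    (J T0 k f p : ℕ) (hJ : 0 < J) (hT0 : 0 < T0) (hk : 0 < k) (hf : 0 < f)
    (hp : Even p) (hp2 : 2 ≤ p)
    (t : ℕ) (ht : T0 < t)
    (lamBar ξ : ℝ) (hlam : 0 < lamBar) (hξ : 0 < ξ)
    (X : Fin (J + 1) → Fin k → ℝ) (μ : Fin (J + 1) → Fin f → ℝ)
    (β : ℕ → Fin k → ℝ) (lam : ℕ → Fin f → ℝ)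
    (hlamBd : ∀ s, (s ∈ Finset.Icc 1 T0 ∨ s = t) → ∀ i, |lam s i| ≤ lamBar)
    (heig : ∀ v : Fin f → ℝ,
      ξ * ∑ i, v i ^ 2 ≤
        (T0 : ℝ)⁻¹ * ∑ s ∈ Finset.Icc 1 T0, (∑ i, v i * lam s i) ^ 2)
    (ε : Fin (J + 1) → ℕ → Ω → ℝ)
    (hεmeas : ∀ j s, Measurable (ε j s))
    (hindep : iIndepFun
      (fun js : Fin (J + 1) × {s : ℕ // s ∈ Finset.Icc 1 T0 ∨ s = t} =>
        ε js.1 js.2.1) P)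
    (hmean : ∀ j s, (s ∈ Finset.Icc 1 T0 ∨ s = t) → ∫ ω, ε j s ω ∂P = 0)
    (hmom : ∀ j s, (s ∈ Finset.Icc 1 T0 ∨ s = t) → Integrable (fun ω => |ε j s ω| ^ p) P)
    (hmomt : ∀ j, Integrable (fun ω => |ε j t ω|) P)
    (Y0 : Fin (J + 1) → ℕ → Ω → ℝ)
    (hY0 : ∀ j s ω,
      Y0 j s ω = (∑ i, X j i * β s i) + (∑ i, μ j i * lam s i) + ε j s ω)
    (W : Fin J → Ω → ℝ)
    (hWmeas : ∀ j,
      Measurable[⨆ (j' : Fin (J + 1)) (s ∈ Finset.Icc 1 T0),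
        MeasurableSpace.comap (ε j' s) inferInstance] (W j))
    (hWfit : ∀ᵐ ω ∂P,
      (∀ j, 0 ≤ W j ω) ∧
      (∑ j, W j ω) = 1 ∧
      (∀ i, ∑ j, W j ω * X j.succ i = X 0 i) ∧
      (∀ s ∈ Finset.Icc 1 T0, ∑ j, W j ω * Y0 j.succ s ω = Y0 0 s ω))
    (mbar2 mbarp : ℝ)
    (hmbar2 : mbar2 = ⨆ j : Fin (J + 1),
      (T0 : ℝ)⁻¹ * ∑ s ∈ Finset.Icc 1 T0, ∫ ω, |ε j s ω| ^ 2 ∂P)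
    (hmbarp : mbarp = ⨆ j : Fin (J + 1),
      (T0 : ℝ)⁻¹ * ∑ s ∈ Finset.Icc 1 T0, ∫ ω, |ε j s ω| ^ p ∂P) :
    |∫ ω, (Y0 0 t ω - ∑ j, W j ω * Y0 j.succ t ω) ∂P| ≤
      (J : ℝ) * poissonRosenthalConst p ^ ((1 : ℝ) / p) * (lamBar ^ 2 * f / ξ) *
        max (mbarp ^ ((1 : ℝ) / p) / (T0 : ℝ) ^ (1 - 1 / (p : ℝ)))
          (Real.sqrt mbar2 / Real.sqrt T0) :=
  synthetic_control_finite_sample_bias_bound_general P J T0 k f p hJ hT0 hp hp2 t ht lamBar ξ hξ X μ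
    β lam hlamBd heig ε hεmeas hindep hmean hmom Y0 hY0 W hWmeas hWfit mbar2 mbarp hmbar2
end

section
/- Let T0, k, f, J be positive integers and let t be an index with t ∉ {1, …, T0}. Let X_j ∈ ℝ^k and μ_j ∈ ℝ^f for j = 1, …, J+1, let β_s ∈ ℝ^k, λ_s ∈ ℝ^f and ε_{j,s} ∈ ℝ for s ∈ {1, …, T0, t}, and set Y⁰_{j,s} = X_jᵀβ_s + μ_jᵀλ_s + ε_{j,s}. Let Λ be the T0 × f real matrix whose s-th row is λ_sᵀ, and assume ΛᵀΛ is invertible. If real weights w_2, …, w_{J+1} satisfy ∑_{j=2}^{J+1} w_j = 1, ∑_{j=2}^{J+1} w_j X_j = X_1, and ∑_{j=2}^{J+1} w_j Y⁰_{j,s} = Y⁰_{1,s} for every s ∈ {1, …, T0}, then Y⁰_{1,t} − ∑_{j=2}^{J+1} w_j Y⁰_{j,t} = λ_tᵀ (ΛᵀΛ)⁻¹ Λᵀ ( ∑_{j=2}^{J+1} w_j ε_j − ε_1 ) + ε_{1,t} − ∑_{j=2}^{J+1} w_j ε_{j,t}, where ε_j = (ε_{j,1}, …, ε_{j,T0})ᵀ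 ∈ ℝ^{T0}. -/
open Finset Matrix

/-!
Write `Δ v = ∑ⱼ wⱼ v_{j+1} − v₀` for the gap between the synthetic and the treated unit.
It is linear, so under the model `Δ Y_s = Δ X ⬝ β_s + Δ μ ⬝ λ_s + Δ ε_s`, and exact fit on
the predictors kills the first term. Exact fit on the pretreatment outcomes then says
`Λ (Δ μ) = −(Δ ε_s)_{s ≤ T₀}`, and the left inverse `(ΛᵀΛ)⁻¹Λᵀ` of `Λ` recovers `Δ μ`
from the pretreatment shocks; substituting it into `Δ Y_t` gives the identity.
-/

section SynthGap

variable {R M : Type*} [CommRing R] [AddCommGroup M] [Module R M] {J : ℕ}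

def synthGap (w : Fin J → R) (v : Fin (J + 1) → M) : M :=
  ∑ j, w j • v j.succ - v 0

theorem synthGap_add (w : Fin J → R) (u v : Fin (J + 1) → M) :
    synthGap w (u + v) = synthGap w u + synthGap w v := by
  simp only [synthGap, Pi.add_apply, smul_add, sum_add_distrib]
  abel

theorem synthGap_dotProduct {n : Type*} [Fintype n] (w : Fin J → R)
    (v : Fin (J + 1) → n → R) (b : n → R) :
    synthGap w (fun j => v j ⬝ᵥ b) = synthGap w v ⬝ᵥ b := by
  simp only [synthGap, sub_dotProduct, sum_dotProduct, smul_dotProduct]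

theorem synthGap_interactive_fixed_effects {k f : ℕ} (w : Fin J → R)
    (X : Fin (J + 1) → Fin k → R) (μ : Fin (J + 1) → Fin f → R)
    (β : Fin k → R) (lam : Fin f → R) (ε : Fin (J + 1) → R)
    (hX : synthGap w X = 0) :
    synthGap w (fun j => X j ⬝ᵥ β + μ j ⬝ᵥ lam + ε j) = synthGap w μ ⬝ᵥ lam + synthGap w ε := by
  rw [show (fun j => X j ⬝ᵥ β + μ j ⬝ᵥ lam + ε j)
      = ((fun j => X j ⬝ᵥ β) + fun j => μ j ⬝ᵥ lam) + ε from rfl,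
    synthGap_add, synthGap_add, synthGap_dotProduct, synthGap_dotProduct, hX, zero_dotProduct,
    zero_add]

end SynthGap

theorem Matrix.inv_transpose_mul_mul_transpose_mulVec_mulVec {m n R : Type*} [Fintype m]
    [Fintype n] [DecidableEq n] [CommRing R] (A : Matrix m n R) (hA : IsUnit (Aᵀ * A))
    (v : n → R) :
    ((Aᵀ * A)⁻¹ * Aᵀ) *ᵥ (A *ᵥ v) = v := by
  rw [mulVec_mulVec, Matrix.mul_assoc,
    nonsing_inv_mul _ ((isUnit_iff_isUnit_det _).mp hA), one_mulVec]

theorem synthetic_control_bias_decomposition_general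
    (T0 k f J : ℕ)
    (t : ℕ)
    (X : Fin (J + 1) → Fin k → ℝ) (μ : Fin (J + 1) → Fin f → ℝ)
    (β : ℕ → Fin k → ℝ) (lam : ℕ → Fin f → ℝ)
    (ε : Fin (J + 1) → ℕ → ℝ)
    (Y : Fin (J + 1) → ℕ → ℝ)
    (hY : ∀ j s, Y j s = (∑ i, X j i * β s i) + (∑ i, μ j i * lam s i) + ε j s)
    (Λ : Matrix (Fin T0) (Fin f) ℝ) (hΛ : ∀ (s : Fin T0) (i : Fin f), Λ s i = lam ((s : ℕ) + 1) i)
    (hΛinv : IsUnit (Λᵀ * Λ))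
    (w : Fin J → ℝ)
    (hXfit : ∀ i, ∑ j, w j * X j.succ i = X 0 i)
    (hYfit : ∀ s ∈ Finset.Icc 1 T0, ∑ j, w j * Y j.succ s = Y 0 s) :
    Y 0 t - ∑ j, w j * Y j.succ t =
      lam t ⬝ᵥ ((Λᵀ * Λ)⁻¹ * Λᵀ).mulVec
          (fun s : Fin T0 => (∑ j, w j * ε j.succ ((s : ℕ) + 1)) - ε 0 ((s : ℕ) + 1))
        + ε 0 t - ∑ j, w j * ε j.succ t := by
  have hXgap : synthGap w X = 0 := funext fun i => by simp [synthGap, hXfit]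
  have hYgap (s : ℕ) : synthGap w (Y · s) = synthGap w μ ⬝ᵥ lam s + synthGap w (ε · s) := by
    simp only [hY]
    exact synthGap_interactive_fixed_effects w X μ (β s) (lam s) (ε · s) hXgap
  have hpre : -(Λ *ᵥ synthGap w μ) = fun s : Fin T0 => synthGap w (ε · ((s : ℕ) + 1)) := by
    funext s
    have hfit : synthGap w (Y · ((s : ℕ) + 1)) = 0 := sub_eq_zero.mpr (hYfit _ (by simp))
    have hrow : Λ s = lam ((s : ℕ) + 1) := funext (hΛ s)
    rw [hYgap] at hfit
    rw [Pi.neg_apply, mulVec, hrow, dotProduct_comm]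
    linarith
  simp only [synthGap, smul_eq_mul] at hpre
  rw [← hpre, mulVec_neg, inv_transpose_mul_mul_transpose_mulVec_mulVec Λ hΛinv, dotProduct_neg,
    dotProduct_comm]
  have hgap_t := hYgap t
  simp only [synthGap, smul_eq_mul] at hgap_t
  linarith

/-- The deterministic bias-decomposition identity for the synthetic
control estimator.  Unit `0` is the treated unit and units `j.succ`, `j : Fin J`, are
the controls.  Under the interactive fixed effects model
`Y⁰_{j,s} = X_jᵀ β_s + μ_jᵀ λ_s + ε_{j,s}`, adding-up weights achieving exact fit on
the observed predictors and all pretreatment outcomes satisfy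
`Y⁰_{1,t} − ∑_j w_j Y⁰_{j,t}
  = λ_tᵀ (ΛᵀΛ)⁻¹ Λᵀ (∑_j w_j ε_j − ε_1) + ε_{1,t} − ∑_j w_j ε_{j,t}`. -/
theorem synthetic_control_bias_decomposition
    (T0 k f J : ℕ) (hT0 : 0 < T0) (hk : 0 < k) (hf : 0 < f) (hJ : 0 < J)
    (t : ℕ) (ht : t ∉ Finset.Icc 1 T0)
    (X : Fin (J + 1) → Fin k → ℝ) (μ : Fin (J + 1) → Fin f → ℝ)
    (β : ℕ → Fin k → ℝ) (lam : ℕ → Fin f → ℝ)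
    (ε : Fin (J + 1) → ℕ → ℝ)
    (Y : Fin (J + 1) → ℕ → ℝ)
    (hY : ∀ j s, Y j s = (∑ i, X j i * β s i) + (∑ i, μ j i * lam s i) + ε j s)
    (Λ : Matrix (Fin T0) (Fin f) ℝ) (hΛ : ∀ (s : Fin T0) (i : Fin f), Λ s i = lam ((s : ℕ) + 1) i)
    (hΛinv : IsUnit (Λᵀ * Λ))
    (w : Fin J → ℝ)
    (hsum : ∑ j, w j = 1)
    (hXfit : ∀ i, ∑ j, w j * X j.succ i = X 0 i)
    (hYfit : ∀ s ∈ Finset.Icc 1 T0, ∑ j, w j * Y j.succ s = Y 0 s) :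
    Y 0 t - ∑ j, w j * Y j.succ t =
      lam t ⬝ᵥ ((Λᵀ * Λ)⁻¹ * Λᵀ).mulVec
          (fun s : Fin T0 => (∑ j, w j * ε j.succ ((s : ℕ) + 1)) - ε 0 ((s : ℕ) + 1))
        + ε 0 t - ∑ j, w j * ε j.succ t :=
  synthetic_control_bias_decomposition_general T0 k f J t X μ β lam ε Y hY Λ hΛ hΛinv w hXfit hYfit
end
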